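/- arXiv:math/0601687 — 6 statements merged into one kernel-verified Lean document; each statement's English description precedes it below -/
import Mathlib

section
/- For every positive integer n, the poset NC_n is a bounded lattice: every pair of noncrossing partitions of [n] has a greatest lower bound and a least upper bound in NC_n, the discrete partition (every block a singleton) is the minimum element, and the partition with the single block [n] is the maximum element. -/
/-- A partition of `[n]` (encoded as an equivalence relation / setoid on `Fin n`)
is *noncrossing* if there are no elements `a < b < c < d` with `a` and `c` in one
block and `b` and `d` in a different block. -/
def IsNoncrossing {n : ℕ} (σ : Setoid (Fin n)) : Prop :=
  ∀ a b c d : Fin n, a < b → b < c → c < d → σ a c → σ b d → σ a b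

/-- The discrete partition of `[n]`: every block is a singleton. -/
def discretePartition (n : ℕ) : Setoid (Fin n) := ⟨Eq, eq_equivalence⟩

/-- The partition of `[n]` with a single block `[n]`. -/
def onePartition (n : ℕ) : Setoid (Fin n) :=
  ⟨fun _ _ => True, ⟨fun _ => trivial, fun _ => trivial, fun _ _ => trivial⟩⟩

/-- `NC_n` is a bounded lattice ... -/
theorem NC_boundedLattice (n : ℕ) (hn : 0 < n) :
    (∀ σ τ : Setoid (Fin n), IsNoncrossing σ → IsNoncrossing τ →
      (∃ ρ : Setoid (Fin n), IsNoncrossing ρ ∧ ρ ≤ σ ∧ ρ ≤ τ ∧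
        ∀ υ : Setoid (Fin n), IsNoncrossing υ → υ ≤ σ → υ ≤ τ → υ ≤ ρ) ∧
      (∃ ρ : Setoid (Fin n), IsNoncrossing ρ ∧ σ ≤ ρ ∧ τ ≤ ρ ∧
        ∀ υ : Setoid (Fin n), IsNoncrossing υ → σ ≤ υ → τ ≤ υ → ρ ≤ υ)) ∧
    (IsNoncrossing (discretePartition n) ∧
      ∀ σ : Setoid (Fin n), IsNoncrossing σ → discretePartition n ≤ σ) ∧
    (IsNoncrossing (onePartition n) ∧
      ∀ σ : Setoid (Fin n), IsNoncrossing σ → σ ≤ onePartition n) := by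
  refine ⟨fun σ τ hσ hτ => ⟨?_, ?_⟩, ⟨?_, ?_⟩, ⟨?_, ?_⟩⟩
  · -- meet: intersection of relations
    refine ⟨⟨fun x y => σ x y ∧ τ x y,
      ⟨fun x => ⟨σ.refl x, τ.refl x⟩,
       fun h => ⟨σ.symm h.1, τ.symm h.2⟩,
       fun h h' => ⟨σ.trans h.1 h'.1, τ.trans h.2 h'.2⟩⟩⟩,
      ?_, ?_, ?_, ?_⟩
    · intro a b c d hab hbc hcd hac hbd
      exact ⟨hσ a b c d hab hbc hcd hac.1 hbd.1, hτ a b c d hab hbc hcd hac.2 hbd.2⟩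
    · exact Setoid.le_def.2 fun h => h.1
    · exact Setoid.le_def.2 fun h => h.2
    · intro υ _ h1 h2
      exact Setoid.le_def.2 fun h => ⟨Setoid.le_def.1 h1 h, Setoid.le_def.1 h2 h⟩
  · -- join: intersection of all noncrossing upper bounds
    refine ⟨⟨fun x y => ∀ υ : Setoid (Fin n), IsNoncrossing υ → σ ≤ υ → τ ≤ υ → υ x y,
      ⟨fun x υ _ _ _ => υ.refl x,
       fun h υ hυ h1 h2 => υ.symm (h υ hυ h1 h2),
       fun h h' υ hυ h1 h2 => υ.trans (h υ hυ h1 h2) (h' υ hυ h1 h2)⟩⟩,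
      ?_, ?_, ?_, ?_⟩
    · intro a b c d hab hbc hcd hac hbd υ hυ h1 h2
      exact hυ a b c d hab hbc hcd (hac υ hυ h1 h2) (hbd υ hυ h1 h2)
    · exact Setoid.le_def.2 fun h υ _ h1 _ => Setoid.le_def.1 h1 h
    · exact Setoid.le_def.2 fun h υ _ _ h2 => Setoid.le_def.1 h2 h
    · intro υ hυ h1 h2
      exact Setoid.le_def.2 fun h => h υ hυ h1 h2
  · intro a b c d hab hbc _ hac _
    exact absurd (hac ▸ hab) (not_lt.2 hbc.le)
  · intro σ _
    exact Setoid.le_def.2 fun h => h ▸ σ.refl _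
  · intro _ _ _ _ _ _ _ _ _
    trivial
  · intro σ _
    exact Setoid.le_def.2 fun _ => trivial
end

section
/- For every positive integer n, the lattice NC_n is self-dual: there exists a bijection f from the set of noncrossing partitions of [n] to itself such that for all noncrossing partitions σ and τ, σ ≤ τ if and only if f(τ) ≤ f(σ). -/
/-- The noncrossing partition lattice `NC_n`, ordered by refinement. -/
abbrev NC (n : ℕ) := {σ : Setoid (Fin n) // IsNoncrossing σ}

/-- The Kreweras complement (right version). -/
def kre {n : ℕ} (σ : Setoid (Fin n)) : Setoid (Fin n) where
  r a b := ∀ x y : Fin n, σ x y → ((a < x ↔ b < x) ↔ (a < y ↔ b < y))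
  iseqv := by
    refine ⟨?_, ?_, ?_⟩
    · intro a x y _; tauto
    · intro a b h x y hxy; have := h x y hxy; tauto
    · intro a b c h1 h2 x y hxy
      have := h1 x y hxy; have := h2 x y hxy; tauto

/-- The Kreweras complement (left version, its inverse). -/
def kre' {n : ℕ} (σ : Setoid (Fin n)) : Setoid (Fin n) where
  r a b := ∀ x y : Fin n, σ x y → ((x < a ↔ x < b) ↔ (y < a ↔ y < b))
  iseqv := by
    refine ⟨?_, ?_, ?_⟩
    · intro a x y _; tauto
    · intro a b h x y hxy; have := h x y hxy; tauto
    · intro a b c h1 h2 x y hxy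
      have := h1 x y hxy; have := h2 x y hxy; tauto

lemma kre_nc {n : ℕ} (σ : Setoid (Fin n)) : IsNoncrossing (kre σ) := by
  intro a b c d hab hbc hcd h1 h2 x y hxy
  have H1 := h1 x y hxy
  have H2 := h2 x y hxy
  simp only [Fin.lt_def] at *
  omega

lemma kre'_nc {n : ℕ} (σ : Setoid (Fin n)) : IsNoncrossing (kre' σ) := by
  intro a b c d hab hbc hcd h1 h2 x y hxy
  have H1 := h1 x y hxy
  have H2 := h2 x y hxy
  simp only [Fin.lt_def] at *
  omega

lemma kre_anti {n : ℕ} {σ τ : Setoid (Fin n)} (h : σ ≤ τ) : kre τ ≤ kre σ := by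
  rw [Setoid.le_def] at h ⊢
  intro a b hab x y hxy
  exact hab x y (h hxy)

lemma kre'_anti {n : ℕ} {σ τ : Setoid (Fin n)} (h : σ ≤ τ) : kre' τ ≤ kre' σ := by
  rw [Setoid.le_def] at h ⊢
  intro a b hab x y hxy
  exact hab x y (h hxy)

open Classical in
lemma kre_hard_lt {n : ℕ} (σ : Setoid (Fin n)) (hσ : IsNoncrossing σ) (i j : Fin n)
    (hij : i < j) (h : ¬ σ i j) :
    ∃ a b : Fin n, (kre σ).r a b ∧ ¬((a < i ↔ a < j) ↔ (b < i ↔ b < j)) := by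
  set B : Finset (Fin n) := Finset.univ.filter (fun x => σ i x) with hB
  have memB : ∀ x, x ∈ B ↔ σ i x := by intro x; simp [hB]
  have hiB : i ∈ B := (memB i).2 (σ.iseqv.refl i)
  have hBrel : ∀ x ∈ B, ∀ y ∈ B, σ x y := fun x hx y hy =>
    σ.iseqv.trans (σ.iseqv.symm ((memB x).1 hx)) ((memB y).1 hy)
  set Bj := B.filter (fun x => x < j) with hBj
  have hiBj : i ∈ Bj := by
    rw [hBj, Finset.mem_filter]; exact ⟨hiB, hij⟩
  set a := Bj.max' ⟨i, hiBj⟩ with ha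
  have haBj : a ∈ Bj := Finset.max'_mem _ _
  have haB : a ∈ B := (Finset.mem_filter.1 haBj).1
  have haj : (a : ℕ) < j := (Finset.mem_filter.1 haBj).2
  have hia : (i : ℕ) ≤ a := Finset.le_max' _ i hiBj
  have hamax : ∀ x ∈ B, (x : ℕ) < j → (x : ℕ) ≤ a := fun x hx hxj =>
    Finset.le_max' _ x (by rw [hBj, Finset.mem_filter]; exact ⟨hx, hxj⟩)
  by_cases hA : (B.filter (fun x => j ≤ x)).Nonempty
  · -- there is an element of the block of i that is ≥ j
    set c := (B.filter (fun x => j ≤ x)).min' hA with hc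
    have hcB : c ∈ B := (Finset.mem_filter.1 (Finset.min'_mem _ hA)).1
    have hjc : (j : ℕ) ≤ c := (Finset.mem_filter.1 (Finset.min'_mem _ hA)).2
    have hcmin : ∀ x ∈ B, (j : ℕ) ≤ x → (c : ℕ) ≤ x := fun x hx hjx =>
      Finset.min'_le _ x (Finset.mem_filter.2 ⟨hx, hjx⟩)
    have hjc' : (j : ℕ) < c := by
      rcases Nat.lt_or_ge (j : ℕ) c with hlt | hge
      · exact hlt
      · exfalso
        have : j = c := Fin.ext (le_antisymm hjc hge)
        exact h (this ▸ (memB c).1 hcB)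
    have hσac : σ a c := hBrel a haB c hcB
    set b : Fin n := ⟨(c : ℕ) - 1, by have := c.isLt; omega⟩ with hbdef
    have hgap : ∀ x ∈ B, ¬((a : ℕ) < x ∧ (x : ℕ) < c) := by
      rintro x hx ⟨h1, h2⟩
      rcases Nat.lt_or_ge (x : ℕ) (j : ℕ) with hxj | hjx
      · have := hamax x hx hxj; omega
      · have := hcmin x hx hjx; omega
    have hmemBeq : ∀ x y : Fin n, σ x y → x ∈ B → y ∈ B := fun x y hxy hx =>
      (memB y).2 (σ.iseqv.trans ((memB x).1 hx) hxy)
    have hclass : ∀ x y, σ x y → (a : ℕ) < x → (x : ℕ) < c →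
        (a : ℕ) < y ∧ (y : ℕ) < c := by
      intro x y hxy hax hxc
      have hxB : x ∉ B := fun hx => hgap x hx ⟨hax, hxc⟩
      constructor
      · by_contra hy
        push_neg at hy
        rcases Nat.lt_or_ge (y : ℕ) (a : ℕ) with hy' | hy'
        · have hya : σ y a := hσ y a x c (Fin.lt_def.mpr hy') (Fin.lt_def.mpr hax)
            (Fin.lt_def.mpr hxc) (σ.iseqv.symm hxy) hσac
          exact hxB (hmemBeq y x (σ.iseqv.symm hxy)
            (hmemBeq a y (σ.iseqv.symm hya) haB))
        · have : y = a := Fin.ext (le_antisymm hy (by exact hy'))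
          exact hxB (hmemBeq y x (σ.iseqv.symm hxy) (this ▸ haB))
      · by_contra hy
        push_neg at hy
        rcases Nat.lt_or_ge (c : ℕ) (y : ℕ) with hy' | hy'
        · have hax' : σ a x := hσ a x c y (Fin.lt_def.mpr hax) (Fin.lt_def.mpr hxc)
            (Fin.lt_def.mpr hy') hσac hxy
          exact hxB (hmemBeq a x hax' haB)
        · have : c = y := Fin.ext (le_antisymm hy hy')
          exact hxB (hmemBeq y x (σ.iseqv.symm hxy) (this ▸ hcB))
    refine ⟨a, b, ?_, ?_⟩
    · intro x y hxy
      have h1 := hclass x y hxy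
      have h2 := hclass y x (σ.iseqv.symm hxy)
      have hb : (b : ℕ) = (c : ℕ) - 1 := rfl
      simp only [Fin.lt_def]
      omega
    · have hb : (b : ℕ) = (c : ℕ) - 1 := rfl
      simp only [Fin.lt_def]
      omega
  · -- all of the block of i is < j
    have hBlt : ∀ x ∈ B, (x : ℕ) < j := by
      intro x hx
      by_contra hxj
      exact hA ⟨x, Finset.mem_filter.2 ⟨hx, Fin.le_def.mpr (Nat.le_of_not_lt hxj)⟩⟩
    have hale : ∀ x ∈ B, (x : ℕ) ≤ a := fun x hx => hamax x hx (hBlt x hx)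
    set c' := B.min' ⟨i, hiB⟩ with hc'
    have hc'B : c' ∈ B := Finset.min'_mem _ _
    have hc'min : ∀ x ∈ B, (c' : ℕ) ≤ x := fun x hx => Finset.min'_le _ x hx
    have hc'i : (c' : ℕ) ≤ i := hc'min i hiB
    have hσc'a : σ c' a := hBrel c' hc'B a haB
    have hmemBeq : ∀ x y : Fin n, σ x y → x ∈ B → y ∈ B := fun x y hxy hx =>
      (memB y).2 (σ.iseqv.trans ((memB x).1 hx) hxy)
    by_cases hz : (c' : ℕ) = 0
    · -- block of i touches 0 : use the interval (a, n-1]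
      set b : Fin n := ⟨n - 1, by have := i.isLt; omega⟩ with hbdef
      have hclassUp : ∀ x y, σ x y → (a : ℕ) < x → (a : ℕ) < y := by
        intro x y hxy hax
        have hxB : x ∉ B := by
          intro hx
          have := hale x hx; omega
        by_contra hy
        push_neg at hy
        rcases Nat.lt_or_ge (y : ℕ) (a : ℕ) with hy' | hy'
        · by_cases hy0 : (y : ℕ) = 0
          · have : c' = y := Fin.ext (by omega)
            exact hxB (hmemBeq y x (σ.iseqv.symm hxy) (this ▸ hc'B))
          · have hyc' : σ c' y := hσ c' y a x (Fin.lt_def.mpr (by omega))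
              (Fin.lt_def.mpr hy') (Fin.lt_def.mpr hax) hσc'a (σ.iseqv.symm hxy)
            exact hxB (hmemBeq y x (σ.iseqv.symm hxy) (hmemBeq c' y hyc' hc'B))
        · have : y = a := Fin.ext (le_antisymm hy hy')
          exact hxB (hmemBeq y x (σ.iseqv.symm hxy) (this ▸ haB))
      refine ⟨a, b, ?_, ?_⟩
      · intro x y hxy
        have h1 := hclassUp x y hxy
        have h2 := hclassUp y x (σ.iseqv.symm hxy)
        have hb : (b : ℕ) = n - 1 := rfl
        have := x.isLt; have := y.isLt
        simp only [Fin.lt_def]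
        omega
      · have hb : (b : ℕ) = n - 1 := rfl
        have := j.isLt
        simp only [Fin.lt_def]
        omega
    · -- block of i does not touch 0 : use the interval (c'-1, a]
      set b : Fin n := ⟨(c' : ℕ) - 1, by have := c'.isLt; omega⟩ with hbdef
      have hclassIn : ∀ x y, σ x y → (c' : ℕ) ≤ x → (x : ℕ) ≤ a →
          (c' : ℕ) ≤ y ∧ (y : ℕ) ≤ a := by
        intro x y hxy h1 h2
        by_cases hxB : x ∈ B
        · have hyB : y ∈ B := hmemBeq x y hxy hxB
          exact ⟨hc'min y hyB, hale y hyB⟩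
        · have h1' : (c' : ℕ) < x := by
            rcases Nat.lt_or_ge (c' : ℕ) (x : ℕ) with hlt | hge
            · exact hlt
            · exact absurd ((Fin.ext (le_antisymm h1 hge) : c' = x) ▸ hc'B) hxB
          have h2' : (x : ℕ) < a := by
            rcases Nat.lt_or_ge (x : ℕ) (a : ℕ) with hlt | hge
            · exact hlt
            · exact absurd ((Fin.ext (le_antisymm hge h2) : a = x) ▸ haB) hxB
          constructor
          · by_contra hy
            push_neg at hy
            have hyc' : σ y c' := hσ y c' x a (Fin.lt_def.mpr (by omega))
              (Fin.lt_def.mpr h1') (Fin.lt_def.mpr h2') (σ.iseqv.symm hxy) hσc'a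
            exact hxB (hmemBeq y x (σ.iseqv.symm hxy)
              (hmemBeq c' y (σ.iseqv.symm hyc') hc'B))
          · by_contra hy
            push_neg at hy
            have hc'x : σ c' x := hσ c' x a y (Fin.lt_def.mpr h1')
              (Fin.lt_def.mpr h2') (Fin.lt_def.mpr (by omega)) hσc'a hxy
            exact hxB (hmemBeq c' x hc'x hc'B)
      refine ⟨b, a, ?_, ?_⟩
      · intro x y hxy
        have h1 := hclassIn x y hxy
        have h2 := hclassIn y x (σ.iseqv.symm hxy)
        have hb : (b : ℕ) = (c' : ℕ) - 1 := rfl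
        simp only [Fin.lt_def]
        omega
      · have hb : (b : ℕ) = (c' : ℕ) - 1 := rfl
        simp only [Fin.lt_def]
        omega

lemma kre_hard {n : ℕ} (σ : Setoid (Fin n)) (hσ : IsNoncrossing σ) (i j : Fin n)
    (h : ¬ σ i j) :
    ∃ a b : Fin n, (kre σ).r a b ∧ ¬((a < i ↔ a < j) ↔ (b < i ↔ b < j)) := by
  rcases lt_trichotomy i j with hij | hij | hij
  · exact kre_hard_lt σ hσ i j hij h
  · exact absurd (hij ▸ σ.iseqv.refl i) h
  · obtain ⟨a, b, hab, hne⟩ := kre_hard_lt σ hσ j i hij (fun hh => h (σ.iseqv.symm hh))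
    exact ⟨a, b, hab, by tauto⟩

lemma kre'_kre {n : ℕ} (σ : Setoid (Fin n)) (hσ : IsNoncrossing σ) :
    kre' (kre σ) = σ := by
  apply Setoid.ext
  intro i j
  constructor
  · intro hk
    by_contra h
    obtain ⟨a, b, hab, hne⟩ := kre_hard σ hσ i j h
    exact hne (hk a b hab)
  · intro hij a b hab
    have := hab i j hij
    tauto

instance setoidFinite {n : ℕ} : Finite (Setoid (Fin n)) :=
  Finite.of_injective (fun s => s.r)
    (fun a b h => Setoid.ext fun x y => iff_of_eq (congrFun (congrFun h x) y))

/-- `NC_n` is self-dual: there is a bijection `f` from the set of noncrossing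
partitions of `[n]` to itself such that `σ ≤ τ` iff `f τ ≤ f σ`. -/
theorem NC_selfDual (n : ℕ) (hn : 0 < n) :
    ∃ f : NC n → NC n, Function.Bijective f ∧
      ∀ σ τ : NC n, σ ≤ τ ↔ f τ ≤ f σ := by
  refine ⟨fun σ => ⟨kre σ.1, kre_nc σ.1⟩, ?_, ?_⟩
  · rw [← Finite.injective_iff_bijective]
    intro σ τ hfst
    have h1 : kre σ.1 = kre τ.1 := congrArg Subtype.val hfst
    have h2 : σ.1 = τ.1 := by
      rw [← kre'_kre σ.1 σ.2, ← kre'_kre τ.1 τ.2, h1]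
    exact Subtype.ext h2
  · intro σ τ
    constructor
    · intro h
      exact kre_anti h
    · intro h
      have h2 : kre' (kre σ.1) ≤ kre' (kre τ.1) := kre'_anti h
      rw [kre'_kre σ.1 σ.2, kre'_kre τ.1 τ.2] at h2
      exact h2
end

section
/- The lattice NC_n is locally self-dual: for all noncrossing partitions σ ≤ τ of [n], there exists a bijection f from the interval [σ, τ] = {ρ ∈ NC_n : σ ≤ ρ ≤ τ} to itself such that for all ρ, ρ' in this interval, ρ ≤ ρ' if and only if f(ρ') ≤ f(ρ). -/
set_option linter.unusedSectionVars false
set_option linter.unusedVariables false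

section Core
variable {α : Type*} [LinearOrder α]

/-- noncrossing predicate for a general linear order -/
def NCross (σ : Setoid α) : Prop :=
  ∀ a b c d : α, a < b → b < c → c < d → σ a c → σ b d → σ a b

/-- saturation of a set under a setoid -/
def sat (ρ : Setoid α) (S : Set α) : Prop := ∀ ⦃c⦄, c ∈ S → ∀ ⦃d⦄, ρ c d → d ∈ S

theorem sat.inter {ρ : Setoid α} {S T : Set α} (hS : sat ρ S) (hT : sat ρ T) :
    sat ρ (S ∩ T) := fun c hc d hd => ⟨hS hc.1 hd, hT hc.2 hd⟩

theorem sat.diff {ρ : Setoid α} {S T : Set α} (hS : sat ρ S) (hT : sat ρ T) :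
    sat ρ (S \ T) := fun c hc d hd =>
  ⟨hS hc.1 hd, fun hdT => hc.2 (hT hdT (ρ.symm hd))⟩

/-- The "Kreweras" map: `Kr ρ` relates `x y` iff every `ρ`-related pair `(c,d)` has
`x ∈ [c,d) ↔ y ∈ [c,d)`. -/
def Kr (ρ : Setoid α) : Setoid α :=
  ⟨fun x y => ∀ ⦃c d⦄, ρ c d → (x ∈ Set.Ico c d ↔ y ∈ Set.Ico c d),
   ⟨fun _ _ _ _ => Iff.rfl,
    fun h c d hcd => (h hcd).symm,
    fun h1 h2 c d hcd => (h1 hcd).trans (h2 hcd)⟩⟩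

/-- The mirrored map with `Ioc`. -/
def Lr (ρ : Setoid α) : Setoid α :=
  ⟨fun x y => ∀ ⦃c d⦄, ρ c d → (x ∈ Set.Ioc c d ↔ y ∈ Set.Ioc c d),
   ⟨fun _ _ _ _ => Iff.rfl,
    fun h c d hcd => (h hcd).symm,
    fun h1 h2 c d hcd => (h1 hcd).trans (h2 hcd)⟩⟩

theorem kr_iff_sat {ρ : Setoid α} {x y : α} (hxy : x ≤ y) :
    Kr ρ x y ↔ sat ρ (Set.Ioc x y) := by
  constructor
  · intro hK c hc d hcd
    rcases hc with ⟨hxc, hcy⟩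
    rcases le_or_gt d x with h | h
    · have h1 : x ∈ Set.Ico d c := ⟨h, hxc⟩
      have h2 := (hK (ρ.symm hcd)).mp h1
      exact absurd h2.2 (not_lt.mpr hcy)
    · refine ⟨h, ?_⟩
      by_contra hdy
      push_neg at hdy
      have h2 := (hK hcd).mpr ⟨hcy, hdy⟩
      exact absurd hxc (not_lt.mpr h2.1)
  · intro hs c d hcd
    constructor
    · rintro ⟨hcx, hxd⟩
      refine ⟨hcx.trans hxy, ?_⟩
      by_contra hdy
      push_neg at hdy
      have := hs (⟨hxd, hdy⟩ : d ∈ Set.Ioc x y) (ρ.symm hcd)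
      exact absurd this.1 (not_lt.mpr hcx)
    · rintro ⟨hcy, hyd⟩
      refine ⟨?_, lt_of_le_of_lt hxy hyd⟩
      by_contra hxc
      push_neg at hxc
      have := hs (⟨hxc, hcy⟩ : c ∈ Set.Ioc x y) hcd
      exact absurd this.2 (not_le.mpr hyd)

theorem lr_iff_sat {ρ : Setoid α} {x y : α} (hxy : x ≤ y) :
    Lr ρ x y ↔ sat ρ (Set.Ico x y) := by
  constructor
  · intro hK c hc d hcd
    rcases hc with ⟨hxc, hcy⟩
    rcases lt_or_ge d x with h | h
    · have h1 : x ∈ Set.Ioc d c := ⟨h, hxc⟩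
      have h2 := (hK (ρ.symm hcd)).mp h1
      exact absurd hcy (not_lt.mpr h2.2)
    · refine ⟨h, ?_⟩
      by_contra hdy
      push_neg at hdy
      have h2 := (hK hcd).mpr ⟨hcy, hdy⟩
      exact absurd h2.1 (not_lt.mpr hxc)
  · intro hs c d hcd
    constructor
    · rintro ⟨hcx, hxd⟩
      refine ⟨lt_of_lt_of_le hcx hxy, ?_⟩
      by_contra hdy
      push_neg at hdy
      have := hs (⟨hxd, hdy⟩ : d ∈ Set.Ico x y) (ρ.symm hcd)
      exact absurd hcx (not_lt.mpr this.1)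
    · rintro ⟨hcy, hyd⟩
      refine ⟨?_, hxy.trans hyd⟩
      by_contra hxc
      push_neg at hxc
      have := hs (⟨hxc, hcy⟩ : c ∈ Set.Ico x y) hcd
      exact absurd this.2 (not_lt.mpr hyd)

theorem kr_antitone {ρ ρ' : Setoid α} (h : ρ ≤ ρ') : Kr ρ' ≤ Kr ρ :=
  Setoid.le_def.mpr fun hK c d hcd => hK (h hcd)

theorem lr_antitone {ρ ρ' : Setoid α} (h : ρ ≤ ρ') : Lr ρ' ≤ Lr ρ :=
  Setoid.le_def.mpr fun hK c d hcd => hK (h hcd)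

theorem kr_ncross (ρ : Setoid α) : NCross (Kr ρ) := by
  intro a b c d hab hbc hcd hac hbd
  rw [kr_iff_sat (hab.trans hbc).le] at hac
  rw [kr_iff_sat (hbc.trans hcd).le] at hbd
  refine (kr_iff_sat hab.le).mpr ?_
  have h1 : Set.Ioc b c = Set.Ioc a c ∩ Set.Ioc b d := by
    ext t
    simp only [Set.mem_Ioc, Set.mem_inter_iff]
    constructor
    · rintro ⟨h1, h2⟩; exact ⟨⟨hab.trans h1, h2⟩, ⟨h1, h2.trans hcd.le⟩⟩
    · rintro ⟨⟨_, h2⟩, ⟨h3, _⟩⟩; exact ⟨h3, h2⟩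
  have h2 : Set.Ioc a b = Set.Ioc a c \ Set.Ioc b c := by
    ext t
    simp only [Set.mem_Ioc, Set.mem_diff, not_and, not_le]
    constructor
    · rintro ⟨h1, h2⟩; exact ⟨⟨h1, h2.trans hbc.le⟩, fun h3 => absurd h2 (not_le.mpr h3)⟩
    · rintro ⟨⟨h1, h2⟩, h3⟩
      refine ⟨h1, ?_⟩
      by_contra h4
      push_neg at h4
      exact absurd h2 (not_le.mpr (h3 h4))
  rw [h2, h1]
  exact hac.diff (hac.inter hbd)

theorem lr_ncross (ρ : Setoid α) : NCross (Lr ρ) := by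
  intro a b c d hab hbc hcd hac hbd
  rw [lr_iff_sat (hab.trans hbc).le] at hac
  rw [lr_iff_sat (hbc.trans hcd).le] at hbd
  refine (lr_iff_sat hab.le).mpr ?_
  have h1 : Set.Ico b c = Set.Ico a c ∩ Set.Ico b d := by
    ext t
    simp only [Set.mem_Ico, Set.mem_inter_iff]
    constructor
    · rintro ⟨h1, h2⟩; exact ⟨⟨hab.le.trans h1, h2⟩, ⟨h1, h2.trans hcd⟩⟩
    · rintro ⟨⟨_, h2⟩, ⟨h3, _⟩⟩; exact ⟨h3, h2⟩
  have h2 : Set.Ico a b = Set.Ico a c \ Set.Ico b c := by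
    ext t
    simp only [Set.mem_Ico, Set.mem_diff, not_and, not_lt]
    constructor
    · rintro ⟨h1, h2⟩; exact ⟨⟨h1, h2.trans hbc⟩, fun h3 => absurd h2 (not_lt.mpr h3)⟩
    · rintro ⟨⟨h1, h2⟩, h3⟩
      refine ⟨h1, ?_⟩
      by_contra h4
      push_neg at h4
      exact absurd h2 (not_lt.mpr (h3 h4))
  rw [h2, h1]
  exact hac.diff (hac.inter hbd)

/-- easy Galois direction: `ρ x y` implies `[x,y)` is `Kr ρ`-saturated -/
theorem gal_K {ρ : Setoid α} {x y : α} (hρ : ρ x y) :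
    sat (Kr ρ) (Set.Ico x y) := fun u hu v hK => (hK hρ).mp hu

theorem gal_L {ρ : Setoid α} {x y : α} (hρ : ρ x y) :
    sat (Lr ρ) (Set.Ioc x y) := fun u hu v hK => (hK hρ).mp hu

end Core
section Hard
variable {α : Type*} [LinearOrder α] [Fintype α]

theorem hardK {ρ : Setoid α} (hnc : NCross ρ) {a b : α}
    (hab : a ≤ b) (hsat : sat (Kr ρ) (Set.Ico a b)) : ρ a b := by
  classical
  rcases eq_or_lt_of_le hab with rfl | hab'
  · exact ρ.refl a
  by_contra hρab
  -- x : the largest element of the block of `a` inside `[a,b)`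
  set FA := Finset.univ.filter (fun w => ρ a w ∧ a ≤ w ∧ w < b) with hFAdef
  have hFA : FA.Nonempty := ⟨a, Finset.mem_filter.mpr ⟨Finset.mem_univ _, ρ.refl a, le_rfl, hab'⟩⟩
  set x := FA.max' hFA with hx_def
  have hxmem : ρ a x ∧ a ≤ x ∧ x < b :=
    (Finset.mem_filter.mp (FA.max'_mem hFA)).2
  obtain ⟨hax, hax2, hxb⟩ := hxmem
  have hxmax : ∀ w, ρ a w → a ≤ w → w < b → w ≤ x := fun w h1 h2 h3 =>
    FA.le_max' _ (Finset.mem_filter.mpr ⟨Finset.mem_univ _, h1, h2, h3⟩)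
  have hxIco : x ∈ Set.Ico a b := ⟨hax2, hxb⟩
  -- the Kr-block of x
  set FS := Finset.univ.filter (fun w => Kr ρ x w) with hFSdef
  have hxFS : x ∈ FS := Finset.mem_filter.mpr ⟨Finset.mem_univ _, (Kr ρ).refl x⟩
  have hFS : FS.Nonempty := ⟨x, hxFS⟩
  set p := FS.min' hFS with hp_def
  set q := FS.max' hFS with hq_def
  have hKxp : Kr ρ x p := (Finset.mem_filter.mp (FS.min'_mem hFS)).2
  have hKxq : Kr ρ x q := (Finset.mem_filter.mp (FS.max'_mem hFS)).2
  have hpx : p ≤ x := FS.min'_le x hxFS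
  have hxq : x ≤ q := FS.le_max' x hxFS
  have hpq' : p ≤ q := hpx.trans hxq
  have hpIco : p ∈ Set.Ico a b := hsat hxIco hKxp
  have hqIco : q ∈ Set.Ico a b := hsat hxIco hKxq
  have hap : a ≤ p := hpIco.1
  have hqb : q < b := hqIco.2
  have hpq : sat ρ (Set.Ioc p q) :=
    (kr_iff_sat hpq').mp ((Kr ρ).trans ((Kr ρ).symm hKxp) hKxq)
  -- z : the successor of q
  set FZ := Finset.univ.filter (fun w => q < w) with hFZdef
  have hbFZ : b ∈ FZ := Finset.mem_filter.mpr ⟨Finset.mem_univ _, hqb⟩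
  have hFZ : FZ.Nonempty := ⟨b, hbFZ⟩
  set z := FZ.min' hFZ with hz_def
  have hqz : q < z := (Finset.mem_filter.mp (FZ.min'_mem hFZ)).2
  have hzb : z ≤ b := FZ.min'_le b hbFZ
  have hzmin : ∀ w, q < w → z ≤ w := fun w hw =>
    FZ.min'_le w (Finset.mem_filter.mpr ⟨Finset.mem_univ _, hw⟩)
  have hxz : x < z := lt_of_le_of_lt hxq hqz
  have haz : a ≤ z := (hax2.trans hxq).trans hqz.le
  have haz' : a < z := lt_of_le_of_lt hax2 hxz
  by_cases hz : ρ a z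
  · rcases eq_or_lt_of_le hzb with h | h
    · exact hρab (h ▸ hz)
    · exact absurd (hxmax z hz haz h) (not_le.mpr hxz)
  · -- the block C of z
    set FC := Finset.univ.filter (fun w => ρ z w) with hFCdef
    have hzFC : z ∈ FC := Finset.mem_filter.mpr ⟨Finset.mem_univ _, ρ.refl z⟩
    have hFC : FC.Nonempty := ⟨z, hzFC⟩
    set m := FC.min' hFC with hm_def
    set M := FC.max' hFC with hM_def
    have hzm : ρ z m := (Finset.mem_filter.mp (FC.min'_mem hFC)).2
    have hzM : ρ z M := (Finset.mem_filter.mp (FC.max'_mem hFC)).2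
    have hmz : m ≤ z := FC.min'_le z hzFC
    have hzM' : z ≤ M := FC.le_max' z hzFC
    have hmmin : ∀ w, ρ z w → m ≤ w := fun w hw =>
      FC.min'_le w (Finset.mem_filter.mpr ⟨Finset.mem_univ _, hw⟩)
    have hMmax : ∀ w, ρ z w → w ≤ M := fun w hw =>
      FC.le_max' w (Finset.mem_filter.mpr ⟨Finset.mem_univ _, hw⟩)
    have hmnot : m ∉ Set.Ioc p q := by
      intro hmin
      have := hpq hmin (ρ.symm hzm)
      exact absurd this.2 (not_le.mpr hqz)
    rcases le_or_gt m p with hmp | hpm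
    · -- CASE B2 : m ≤ p, so m < a
      have hma : m < a := by
        rcases lt_or_ge m a with h | h
        · exact h
        exfalso
        rcases eq_or_lt_of_le h with h1 | h1
        · exact hz (by rw [h1]; exact ρ.symm hzm)
        · rcases eq_or_lt_of_le (hmp.trans hpx) with h2 | h2
          · exact hz (ρ.trans hax (ρ.symm (by rw [← h2]; exact hzm)))
          · have h5 := hnc a m x z h1 h2 hxz hax (ρ.symm hzm)
            exact hz (ρ.trans h5 (ρ.symm hzm))
      -- e : largest element of C below a
      set FE := Finset.univ.filter (fun w => ρ z w ∧ w < a) with hFEdef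
      have hFE : FE.Nonempty := ⟨m, Finset.mem_filter.mpr ⟨Finset.mem_univ _, hzm, hma⟩⟩
      set e := FE.max' hFE with he_def
      have heprop : ρ z e ∧ e < a := (Finset.mem_filter.mp (FE.max'_mem hFE)).2
      obtain ⟨hze, hea⟩ := heprop
      have hemax : ∀ w, ρ z w → w < a → w ≤ e := fun w h1 h2 =>
        FE.le_max' w (Finset.mem_filter.mpr ⟨Finset.mem_univ _, h1, h2⟩)
      have hep : e < p := lt_of_lt_of_le hea hap
      have heq : e ≤ q := hep.le.trans hpq'
      -- no element of C in (e, x]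
      have hzc_mid : ∀ c, ρ z c → e < c → c ≤ x → False := by
        intro c hzc hec hcx
        rcases lt_or_ge c a with h | h
        · exact absurd (hemax c hzc h) (not_le.mpr hec)
        · rcases eq_or_lt_of_le h with h1 | h1
          · exact hz (by rw [h1]; exact ρ.symm hzc)
          · rcases eq_or_lt_of_le hcx with h2 | h2
            · exact hz (ρ.trans hax (ρ.symm (by rw [← h2]; exact hzc)))
            · have h5 := hnc a c x z h1 h2 hxz hax (ρ.symm hzc)
              exact hz (ρ.trans h5 (ρ.symm hzc))
      have satQ : sat ρ (Set.Ioc e q) := by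
        intro c hc d hcd
        rcases lt_or_ge p c with hpc | hcp
        · have h0 := hpq ⟨hpc, hc.2⟩ hcd
          exact ⟨hep.trans h0.1, h0.2⟩
        · have hcz : c < z := lt_of_le_of_lt (hcp.trans hpq') hqz
          by_cases hzc : ρ z c
          · exact absurd (hcp.trans hpx) (fun h => hzc_mid c hzc hc.1 h)
          · by_cases hac : ρ a c
            · constructor
              · by_contra hde
                push_neg at hde
                rcases eq_or_lt_of_le hde with h1 | h1
                · exact hz (ρ.trans (ρ.trans hac hcd) (by rw [h1]; exact ρ.symm hze))
                · have h5 := hnc d e a z h1 hea haz' (ρ.symm (ρ.trans hac hcd)) (ρ.symm hze)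
                  exact hz (ρ.trans (ρ.trans (ρ.trans hac hcd) h5) (ρ.symm hze))
              · by_contra hdq
                push_neg at hdq
                have hzd := hzmin d hdq
                rcases eq_or_lt_of_le hzd with h1 | h1
                · exact hz (by rw [h1]; exact ρ.trans hac hcd)
                · have h5 := hnc e c z d hc.1 hcz h1 (ρ.symm hze) hcd
                  exact hzc (ρ.trans hze h5)
            · constructor
              · by_contra hde
                push_neg at hde
                rcases eq_or_lt_of_le hde with h1 | h1
                · have hce : ρ c e := by rw [← h1]; exact hcd
                  exact hzc (ρ.trans hze (ρ.symm hce))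
                · have h5 := hnc d e c z h1 hc.1 hcz (ρ.symm hcd) (ρ.symm hze)
                  exact hzc (ρ.trans (ρ.trans hze (ρ.symm h5)) (ρ.symm hcd))
              · by_contra hdq
                push_neg at hdq
                have hzd := hzmin d hdq
                rcases eq_or_lt_of_le hzd with h1 | h1
                · exact hzc (by rw [h1]; exact ρ.symm hcd)
                · have h5 := hnc e c z d hc.1 hcz h1 (ρ.symm hze) hcd
                  exact hzc (ρ.trans hze h5)
      have hKeq : Kr ρ e q := (kr_iff_sat heq).mpr satQ
      have hKxe : Kr ρ x e := (Kr ρ).trans hKxq ((Kr ρ).symm hKeq)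
      have h6 := hsat hxIco hKxe
      exact absurd h6.1 (not_le.mpr hea)
    · -- CASE B1 : p < m, hence q < m, hence m = z
      have hqm : q < m := by
        by_contra h
        push_neg at h
        exact hmnot ⟨hpm, h⟩
      have hmzeq : m = z := le_antisymm hmz (hzmin m hqm)
      have satPM : sat ρ (Set.Ioc p M) := by
        intro c hc d hcd
        rcases le_or_gt c q with hcq | hqc
        · have h0 := hpq ⟨hc.1, hcq⟩ hcd
          exact ⟨h0.1, h0.2.trans (hqz.le.trans hzM')⟩
        · by_cases hzc : ρ z c
          · have hzd : ρ z d := ρ.trans hzc hcd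
            exact ⟨lt_of_le_of_lt hpq' (lt_of_lt_of_le hqm (hmmin d hzd)), hMmax d hzd⟩
          · have hzc' : z < c := lt_of_le_of_ne (hzmin c hqc)
              (fun h => hzc (by rw [← h]))
            have hcM : c < M := lt_of_le_of_ne hc.2 (fun h => hzc (by rw [h]; exact hzM))
            rcases lt_or_ge p d with h1 | h1
            · refine ⟨h1, ?_⟩
              by_contra h2
              push_neg at h2
              exact hzc (hnc z c M d hzc' hcM h2 hzM hcd)
            · exfalso
              have h5 := hnc d z c M (lt_of_le_of_lt h1 (lt_of_le_of_lt hpq' hqz)) hzc' hcM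
                (ρ.symm hcd) hzM
              have h6 := hmmin d (ρ.symm h5)
              rw [hmzeq] at h6
              exact absurd (h6.trans h1) (not_le.mpr (lt_of_le_of_lt hpq' hqz))
      have hKpM : Kr ρ p M := (kr_iff_sat (hpq'.trans (hqz.le.trans hzM'))).mpr satPM
      have hMFS : M ∈ FS := Finset.mem_filter.mpr ⟨Finset.mem_univ _, (Kr ρ).trans hKxp hKpM⟩
      have hMq : M ≤ q := FS.le_max' M hMFS
      exact absurd (hqz.trans_le hzM') (not_lt.mpr hMq)
end Hard
section Dual
variable {α : Type*} [LinearOrder α]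

def dualSetoid (ρ : Setoid α) : Setoid αᵒᵈ :=
  ⟨fun x y => ρ (OrderDual.ofDual x) (OrderDual.ofDual y),
   ⟨fun _ => ρ.refl _, fun h => ρ.symm h, fun h1 h2 => ρ.trans h1 h2⟩⟩

theorem ncross_dual {ρ : Setoid α} (h : NCross ρ) : NCross (dualSetoid ρ) := by
  intro a b c d hab hbc hcd hac hbd
  have hba : OrderDual.ofDual b < OrderDual.ofDual a := hab
  have hcb : OrderDual.ofDual c < OrderDual.ofDual b := hbc
  have hdc : OrderDual.ofDual d < OrderDual.ofDual c := hcd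
  have h5 := h _ _ _ _ hdc hcb hba (ρ.symm hbd) (ρ.symm hac)
  exact ρ.trans (ρ.trans hac (ρ.symm h5)) (ρ.symm hbd)

theorem kr_dual {ρ : Setoid α} {x y : αᵒᵈ} :
    Kr (dualSetoid ρ) x y ↔ Lr ρ (OrderDual.ofDual x) (OrderDual.ofDual y) := by
  constructor
  · intro h c d hcd
    have h2 := h (c := OrderDual.toDual d) (d := OrderDual.toDual c) (ρ.symm hcd)
    constructor
    · intro hx
      have h3 := h2.mp ⟨hx.2, hx.1⟩
      exact ⟨h3.2, h3.1⟩
    · intro hy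
      have h3 := h2.mpr ⟨hy.2, hy.1⟩
      exact ⟨h3.2, h3.1⟩
  · intro h c d hcd
    have h2 := h (ρ.symm hcd)
    constructor
    · intro hx
      have h3 := h2.mp ⟨hx.2, hx.1⟩
      exact ⟨h3.2, h3.1⟩
    · intro hy
      have h3 := h2.mpr ⟨hy.2, hy.1⟩
      exact ⟨h3.2, h3.1⟩

theorem hardL [Fintype α] {ρ : Setoid α} (hnc : NCross ρ) {a b : α} (hab : a ≤ b)
    (hsat : sat (Lr ρ) (Set.Ioc a b)) : ρ a b := by
  have hsat' : sat (Kr (dualSetoid ρ)) (Set.Ico (OrderDual.toDual b) (OrderDual.toDual a)) := by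
    intro c hc d hK
    have h3 := hsat (⟨hc.2, hc.1⟩ : OrderDual.ofDual c ∈ Set.Ioc a b) (kr_dual.mp hK)
    exact ⟨h3.2, h3.1⟩
  have h := hardK (α := αᵒᵈ) (ρ := dualSetoid ρ) (ncross_dual hnc)
    (a := OrderDual.toDual b) (b := OrderDual.toDual a) hab hsat'
  exact ρ.symm h
end Dual
section Rel
variable {α : Type*} [LinearOrder α]

/-- meet of two setoids -/
def smeet (r s : Setoid α) : Setoid α :=
  ⟨fun x y => r x y ∧ s x y,
   ⟨fun x => ⟨r.refl x, s.refl x⟩, fun h => ⟨r.symm h.1, s.symm h.2⟩,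
    fun h1 h2 => ⟨r.trans h1.1 h2.1, s.trans h1.2 h2.2⟩⟩⟩

theorem smeet_ncross {r s : Setoid α} (hr : NCross r) (hs : NCross s) :
    NCross (smeet r s) := fun a b c d h1 h2 h3 hac hbd =>
  ⟨hr a b c d h1 h2 h3 hac.1 hbd.1, hs a b c d h1 h2 h3 hac.2 hbd.2⟩

/-- relative Kreweras complement w.r.t. `θ` -/
def Kt (θ : Setoid α) (ρ : Setoid α) : Setoid α := smeet (Kr ρ) θ
def Lt (θ : Setoid α) (ρ : Setoid α) : Setoid α := smeet (Lr ρ) θ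

theorem kt_ncross {θ ρ : Setoid α} (hθ : NCross θ) : NCross (Kt θ ρ) :=
  smeet_ncross (kr_ncross ρ) hθ
theorem lt_ncross {θ ρ : Setoid α} (hθ : NCross θ) : NCross (Lt θ ρ) :=
  smeet_ncross (lr_ncross ρ) hθ

theorem kt_le {θ ρ : Setoid α} : Kt θ ρ ≤ θ := Setoid.le_def.mpr fun h => h.2
theorem lt_le {θ ρ : Setoid α} : Lt θ ρ ≤ θ := Setoid.le_def.mpr fun h => h.2

theorem kt_antitone {θ ρ ρ' : Setoid α} (h : ρ ≤ ρ') : Kt θ ρ' ≤ Kt θ ρ :=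
  Setoid.le_def.mpr fun hx => ⟨Setoid.le_def.mp (kr_antitone h) hx.1, hx.2⟩
theorem lt_antitone {θ ρ ρ' : Setoid α} (h : ρ ≤ ρ') : Lt θ ρ' ≤ Lt θ ρ :=
  Setoid.le_def.mpr fun hx => ⟨Setoid.le_def.mp (lr_antitone h) hx.1, hx.2⟩

/-- pair transfer for the Galois inequalities -/
theorem pair_K {ρ : Setoid α} {c d x y : α} (hK : Kr ρ c d) (hρ : ρ x y) :
    x ∈ Set.Ioc c d ↔ y ∈ Set.Ioc c d := by
  have main : ∀ x y : α, x ≤ y → ρ x y → (x ∈ Set.Ioc c d ↔ y ∈ Set.Ioc c d) := by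
    intro x y hxy hρ
    have E := hK hρ
    constructor
    · rintro ⟨hcx, hxd⟩
      refine ⟨hcx.trans_le hxy, ?_⟩
      by_contra hdy
      push_neg at hdy
      have := E.mpr ⟨hxd, hdy⟩
      exact absurd this.1 (not_le.mpr hcx)
    · rintro ⟨hcy, hyd⟩
      refine ⟨?_, hxy.trans hyd⟩
      by_contra hxc
      push_neg at hxc
      have := E.mp ⟨hxc, hcy⟩
      exact absurd this.2 (not_lt.mpr hyd)
  rcases le_total x y with h | h
  · exact main x y h hρ
  · exact (main y x h (ρ.symm hρ)).symm

theorem pair_L {ρ : Setoid α} {c d x y : α} (hL : Lr ρ c d) (hρ : ρ x y) :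
    x ∈ Set.Ico c d ↔ y ∈ Set.Ico c d := by
  have main : ∀ x y : α, x ≤ y → ρ x y → (x ∈ Set.Ico c d ↔ y ∈ Set.Ico c d) := by
    intro x y hxy hρ
    have E := hL hρ
    constructor
    · rintro ⟨hcx, hxd⟩
      refine ⟨hcx.trans hxy, ?_⟩
      by_contra hdy
      push_neg at hdy
      have := E.mpr ⟨hxd, hdy⟩
      exact absurd this.1 (not_lt.mpr hcx)
    · rintro ⟨hcy, hyd⟩
      refine ⟨?_, lt_of_le_of_lt hxy hyd⟩
      by_contra hxc
      push_neg at hxc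
      have := E.mp ⟨hxc, hcy⟩
      exact absurd this.2 (not_le.mpr hyd)
  rcases le_total x y with h | h
  · exact main x y h hρ
  · exact (main y x h (ρ.symm hρ)).symm

/-- Galois inequalities (easy directions) -/
theorem gal_LK {θ ρ : Setoid α} (hρθ : ρ ≤ θ) : ρ ≤ Lt θ (Kt θ ρ) :=
  Setoid.le_def.mpr fun {x y} hxy =>
    ⟨fun _ _ hcd => pair_K hcd.1 hxy, hρθ hxy⟩

theorem gal_KL {θ ρ : Setoid α} (hρθ : ρ ≤ θ) : ρ ≤ Kt θ (Lt θ ρ) :=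
  Setoid.le_def.mpr fun {x y} hxy =>
    ⟨fun _ _ hcd => pair_L hcd.1 hxy, hρθ hxy⟩

end Rel
section Rel2
variable {α : Type*} [LinearOrder α] [Fintype α]

/-- restriction of a setoid to a subtype -/
def subSetoid (P : α → Prop) (ρ : Setoid α) : Setoid (Subtype P) :=
  ⟨fun u v => ρ u.1 v.1,
   ⟨fun u => ρ.refl u.1, fun h => ρ.symm h, fun h1 h2 => ρ.trans h1 h2⟩⟩

theorem subSetoid_ncross {P : α → Prop} {ρ : Setoid α} (h : NCross ρ) :
    NCross (subSetoid P ρ) := by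
  intro a b c d hab hbc hcd hac hbd
  exact h a.1 b.1 c.1 d.1 (Subtype.coe_lt_coe.mpr hab) (Subtype.coe_lt_coe.mpr hbc)
    (Subtype.coe_lt_coe.mpr hcd) hac hbd

/-- outside-block pairs cannot separate elements of a block (Ico version) -/
theorem out_K {θ : Setoid α} (hθ : NCross θ) {x u v c d : α}
    (hu : θ x u) (hv : θ x v) (hc : ¬θ x c) (hcd : θ c d)
    (hmem : u ∈ Set.Ico c d) : v ∈ Set.Ico c d := by
  have hxd : ¬θ x d := fun h => hc (θ.trans h (θ.symm hcd))
  have hcu : c < u := lt_of_le_of_ne hmem.1 (fun h => hc (by rw [h]; exact hu))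
  constructor
  · by_contra hvc
    push_neg at hvc
    have h5 := hθ v c u d hvc hcu hmem.2 (θ.trans (θ.symm hv) hu) hcd
    exact hc (θ.trans hv h5)
  · by_contra hdv
    push_neg at hdv
    have hdv' : d < v := lt_of_le_of_ne hdv (fun h => hxd (by rw [h]; exact hv))
    have h5 := hθ c u d v hcu hmem.2 hdv' hcd (θ.trans (θ.symm hu) hv)
    exact hc (θ.trans hu (θ.symm h5))
theorem out_L {θ : Setoid α} (hθ : NCross θ) {x u v c d : α}
    (hu : θ x u) (hv : θ x v) (hc : ¬θ x c) (hcd : θ c d)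
    (hmem : u ∈ Set.Ioc c d) : v ∈ Set.Ioc c d := by
  have hxd : ¬θ x d := fun h => hc (θ.trans h (θ.symm hcd))
  have hud : u < d := lt_of_le_of_ne hmem.2 (fun h => hxd (by rw [← h]; exact hu))
  constructor
  · by_contra hvc
    push_neg at hvc
    have hvc' : v < c := lt_of_le_of_ne hvc (fun h => hc (by rw [← h]; exact hv))
    have h5 := hθ v c u d hvc' hmem.1 hud (θ.trans (θ.symm hv) hu) hcd
    exact hc (θ.trans hv h5)
  · by_contra hdv
    push_neg at hdv
    have h5 := hθ c u d v hmem.1 hud hdv hcd (θ.trans (θ.symm hu) hv)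
    exact hc (θ.trans hu (θ.symm h5))

/-- hard relative inequality, K-then-L -/
theorem hard_LK {θ ρ : Setoid α} (hθ : NCross θ) (hρ : NCross ρ) (hρθ : ρ ≤ θ) :
    Lt θ (Kt θ ρ) ≤ ρ := by
  have main : ∀ x y : α, x ≤ y → (Lt θ (Kt θ ρ)) x y → ρ x y := by
    intro x y hxy hL
    obtain ⟨hL1, hθxy⟩ := hL
    have hs : sat (Kt θ ρ) (Set.Ico x y) := (lr_iff_sat hxy).mp hL1
    classical
    let B := {w : α // θ x w}
    haveI : Fintype B := Fintype.ofFinite B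
    let ρB : Setoid B := subSetoid _ ρ
    have hρB : NCross ρB := subSetoid_ncross hρ
    set x' : B := ⟨x, θ.refl x⟩ with hx'
    set y' : B := ⟨y, hθxy⟩ with hy'
    have htrans : ∀ u v : B, Kr ρB u v → (Kt θ ρ) u.1 v.1 := by
      intro u v hK
      refine ⟨?_, θ.trans (θ.symm u.2) v.2⟩
      intro c d hcd
      by_cases hcB : θ x c
      · have hdB : θ x d := θ.trans hcB (hρθ hcd)
        have h2 := hK (c := ⟨c, hcB⟩) (d := ⟨d, hdB⟩) hcd
        constructor
        · intro hm
          have h3 := h2.mp ⟨hm.1, hm.2⟩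
          exact ⟨h3.1, h3.2⟩
        · intro hm
          have h3 := h2.mpr ⟨hm.1, hm.2⟩
          exact ⟨h3.1, h3.2⟩
      · exact ⟨out_K hθ u.2 v.2 hcB (hρθ hcd), out_K hθ v.2 u.2 hcB (hρθ hcd)⟩
    have hsB : sat (Kr ρB) (Set.Ico x' y') := by
      intro u hu v hK
      have h3 := hs (⟨hu.1, hu.2⟩ : u.1 ∈ Set.Ico x y) (htrans u v hK)
      exact ⟨h3.1, h3.2⟩
    exact hardK hρB (Subtype.mk_le_mk.mpr hxy) hsB
  refine Setoid.le_def.mpr fun {x y} hxy => ?_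
  rcases le_total x y with h | h
  · exact main x y h hxy
  · exact ρ.symm (main y x h ((Lt θ (Kt θ ρ)).symm hxy))

/-- hard relative inequality, L-then-K -/
theorem hard_KL {θ ρ : Setoid α} (hθ : NCross θ) (hρ : NCross ρ) (hρθ : ρ ≤ θ) :
    Kt θ (Lt θ ρ) ≤ ρ := by
  have main : ∀ x y : α, x ≤ y → (Kt θ (Lt θ ρ)) x y → ρ x y := by
    intro x y hxy hK
    obtain ⟨hK1, hθxy⟩ := hK
    have hs : sat (Lt θ ρ) (Set.Ioc x y) := (kr_iff_sat hxy).mp hK1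
    classical
    let B := {w : α // θ x w}
    haveI : Fintype B := Fintype.ofFinite B
    let ρB : Setoid B := subSetoid _ ρ
    have hρB : NCross ρB := subSetoid_ncross hρ
    set x' : B := ⟨x, θ.refl x⟩ with hx'
    set y' : B := ⟨y, hθxy⟩ with hy'
    have htrans : ∀ u v : B, Lr ρB u v → (Lt θ ρ) u.1 v.1 := by
      intro u v hL
      refine ⟨?_, θ.trans (θ.symm u.2) v.2⟩
      intro c d hcd
      by_cases hcB : θ x c
      · have hdB : θ x d := θ.trans hcB (hρθ hcd)
        have h2 := hL (c := ⟨c, hcB⟩) (d := ⟨d, hdB⟩) hcd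
        constructor
        · intro hm
          have h3 := h2.mp ⟨hm.1, hm.2⟩
          exact ⟨h3.1, h3.2⟩
        · intro hm
          have h3 := h2.mpr ⟨hm.1, hm.2⟩
          exact ⟨h3.1, h3.2⟩
      · exact ⟨out_L hθ u.2 v.2 hcB (hρθ hcd), out_L hθ v.2 u.2 hcB (hρθ hcd)⟩
    have hsB : sat (Lr ρB) (Set.Ioc x' y') := by
      intro u hu v hL
      have h3 := hs (⟨hu.1, hu.2⟩ : u.1 ∈ Set.Ioc x y) (htrans u v hL)
      exact ⟨h3.1, h3.2⟩
    exact hardL hρB (Subtype.mk_le_mk.mpr hxy) hsB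
  refine Setoid.le_def.mpr fun {x y} hxy => ?_
  rcases le_total x y with h | h
  · exact main x y h hxy
  · exact ρ.symm (main y x h ((Kt θ (Lt θ ρ)).symm hxy))
end Rel2

/-- `NC_n` is locally self-dual: for all noncrossing partitions `σ ≤ τ` of `[n]`,
there is a bijection `f` from the interval `[σ, τ] = {ρ : σ ≤ ρ ≤ τ}` to itself
such that `ρ ≤ ρ'` iff `f ρ' ≤ f ρ`. -/
theorem NC_locallySelfDual (n : ℕ) (σ τ : NC n) (h : σ ≤ τ) :
    ∃ f : Set.Icc σ τ → Set.Icc σ τ, Function.Bijective f ∧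
      ∀ ρ ρ' : Set.Icc σ τ, (ρ : NC n) ≤ (ρ' : NC n) ↔ (f ρ' : NC n) ≤ (f ρ : NC n) := by
  have hT : NCross τ.1 := τ.2
  have hS : NCross σ.1 := σ.2
  have hST : σ.1 ≤ τ.1 := h
  set M0 : Setoid (Fin n) := Kt τ.1 σ.1 with hM0def
  have hM0nc : NCross M0 := kt_ncross hT
  have hM0T : M0 ≤ τ.1 := kt_le
  set F0 : Setoid (Fin n) → Setoid (Fin n) := fun ρ => Lt τ.1 (Lt M0 (Kt τ.1 ρ)) with hF0def
  set G0 : Setoid (Fin n) → Setoid (Fin n) := fun ρ => Lt τ.1 (Kt M0 (Kt τ.1 ρ)) with hG0def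
  -- basic bounds
  have hF0nc : ∀ ρ, NCross (F0 ρ) := fun ρ => lt_ncross hT
  have hG0nc : ∀ ρ, NCross (G0 ρ) := fun ρ => lt_ncross hT
  have hF0T : ∀ ρ, F0 ρ ≤ τ.1 := fun ρ => lt_le
  have hG0T : ∀ ρ, G0 ρ ≤ τ.1 := fun ρ => lt_le
  have hF0S : ∀ ρ, σ.1 ≤ ρ → σ.1 ≤ F0 ρ := fun ρ hσρ =>
    le_trans (gal_LK hST) (lt_antitone lt_le)
  have hG0S : ∀ ρ, σ.1 ≤ ρ → σ.1 ≤ G0 ρ := fun ρ hσρ =>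
    le_trans (gal_LK hST) (lt_antitone kt_le)
  -- antitonicity
  have hF0anti : ∀ ρ ρ', ρ ≤ ρ' → F0 ρ' ≤ F0 ρ := fun ρ ρ' hle =>
    lt_antitone (lt_antitone (kt_antitone hle))
  have hG0anti : ∀ ρ ρ', ρ ≤ ρ' → G0 ρ' ≤ G0 ρ := fun ρ ρ' hle =>
    lt_antitone (kt_antitone (kt_antitone hle))
  -- inversion identities
  have eqLKt : ∀ ρ, NCross ρ → ρ ≤ τ.1 → Lt τ.1 (Kt τ.1 ρ) = ρ := fun ρ hρ hρτ =>
    le_antisymm (hard_LK hT hρ hρτ) (gal_LK hρτ)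
  have eqKLt : ∀ w, NCross w → w ≤ τ.1 → Kt τ.1 (Lt τ.1 w) = w := fun w hw hwτ =>
    le_antisymm (hard_KL hT hw hwτ) (gal_KL hwτ)
  have eqLKm : ∀ v, NCross v → v ≤ M0 → Lt M0 (Kt M0 v) = v := fun v hv hvm =>
    le_antisymm (hard_LK hM0nc hv hvm) (gal_LK hvm)
  have eqKLm : ∀ v, NCross v → v ≤ M0 → Kt M0 (Lt M0 v) = v := fun v hv hvm =>
    le_antisymm (hard_KL hM0nc hv hvm) (gal_KL hvm)
  have hGF : ∀ ρ, NCross ρ → σ.1 ≤ ρ → ρ ≤ τ.1 → G0 (F0 ρ) = ρ := by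
    intro ρ hρ hσρ hρτ
    have hw : NCross (Lt M0 (Kt τ.1 ρ)) := lt_ncross hM0nc
    have hwτ : Lt M0 (Kt τ.1 ρ) ≤ τ.1 := le_trans lt_le hM0T
    have s1 : Kt τ.1 (F0 ρ) = Lt M0 (Kt τ.1 ρ) := eqKLt _ hw hwτ
    have s2 : Kt M0 (Lt M0 (Kt τ.1 ρ)) = Kt τ.1 ρ :=
      eqKLm _ (kt_ncross hT) (kt_antitone hσρ)
    show Lt τ.1 (Kt M0 (Kt τ.1 (F0 ρ))) = ρ
    rw [s1, s2]
    exact eqLKt _ hρ hρτ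
  have hFG : ∀ π, NCross π → σ.1 ≤ π → π ≤ τ.1 → F0 (G0 π) = π := by
    intro π hπ hσπ hπτ
    have hw : NCross (Kt M0 (Kt τ.1 π)) := kt_ncross hM0nc
    have hwτ : Kt M0 (Kt τ.1 π) ≤ τ.1 := le_trans kt_le hM0T
    have s1 : Kt τ.1 (G0 π) = Kt M0 (Kt τ.1 π) := eqKLt _ hw hwτ
    have s2 : Lt M0 (Kt M0 (Kt τ.1 π)) = Kt τ.1 π :=
      eqLKm _ (kt_ncross hT) (kt_antitone hσπ)
    show Lt τ.1 (Lt M0 (Kt τ.1 (G0 π))) = π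
    rw [s1, s2]
    exact eqLKt _ hπ hπτ
  -- the maps on the interval
  have memf : ∀ ρ : Set.Icc σ τ, σ.1 ≤ ρ.1.1 ∧ ρ.1.1 ≤ τ.1 := fun ρ => ⟨ρ.2.1, ρ.2.2⟩
  refine ⟨fun ρ => ⟨⟨F0 ρ.1.1, hF0nc _⟩, ⟨hF0S _ (memf ρ).1, hF0T _⟩⟩, ?_, ?_⟩
  · refine Function.bijective_iff_has_inverse.mpr
      ⟨fun π => ⟨⟨G0 π.1.1, hG0nc _⟩, ⟨hG0S _ (memf π).1, hG0T _⟩⟩, ?_, ?_⟩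
    · intro ρ
      apply Subtype.ext
      apply Subtype.ext
      exact hGF ρ.1.1 ρ.1.2 (memf ρ).1 (memf ρ).2
    · intro π
      apply Subtype.ext
      apply Subtype.ext
      exact hFG π.1.1 π.1.2 (memf π).1 (memf π).2
  · intro ρ ρ'
    constructor
    · intro hle
      exact hF0anti _ _ hle
    · intro hle
      have h2 := hG0anti _ _ hle
      rw [hGF ρ.1.1 ρ.1.2 (memf ρ).1 (memf ρ).2,
        hGF ρ'.1.1 ρ'.1.2 (memf ρ').1 (memf ρ').2] at h2
      exact h2
end

section
/- The map σ ↦ π(σ) is an order isomorphism from the noncrossing partition lattice NC_n onto the set {x ∈ S_n : x ≤ c} of permutations below the n-cycle c = (1, 2, …, n) in absolute order; that is, π is injective, its image is exactly {x ∈ S_n : x ≤ c}, and for all noncrossing partitions σ, τ of [n] one has σ ≤ τ in NC_n if and only if π(σ) ≤ π(τ) in absolute order. -/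
/-- `p` is the permutation `π(σ)` associated to the partition `σ`: each block of `σ`
is a cycle of `p`, cycled in increasing order.  Concretely, for every `x`: `p x` lies
in the block of `x`; if some element of the block is larger than `x`, then `p x` is
the least such element; and if `x` is the largest element of its block, then `p x` is
the least element of the block. -/
def IsPiPerm {n : ℕ} (σ : Setoid (Fin n)) (p : Equiv.Perm (Fin n)) : Prop :=
  ∀ x : Fin n,
    σ x (p x) ∧
    ((∃ y, σ x y ∧ x < y) → (x < p x ∧ ∀ y, σ x y → x < y → p x ≤ y)) ∧
    ((∀ y, σ x y → y ≤ x) → ∀ y, σ x y → p x ≤ y)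

/-- `ℓ(x)`: the least `k` such that `x` is a product of `k` transpositions. -/
noncomputable def reflLength {n : ℕ} (x : Equiv.Perm (Fin n)) : ℕ :=
  sInf {k | ∃ l : List (Equiv.Perm (Fin n)),
    (∀ t ∈ l, t.IsSwap) ∧ l.prod = x ∧ l.length = k}

/-- Absolute order on `S_n`: `x ≤ y` iff `ℓ(x) + ℓ(x⁻¹y) = ℓ(y)`. -/
def AbsoluteLe {n : ℕ} (x y : Equiv.Perm (Fin n)) : Prop :=
  reflLength x + reflLength (x⁻¹ * y) = reflLength y


/-!
Since `ℓ(x) = n - #cycles(x)` and signs alternate, multiplying `x` by a transposition `(a b)`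
lowers `ℓ` exactly when `a` and `b` lie in one cycle of `x`, and then splits that cycle. So if
`x ≤ y` in absolute order, `y` is reached from `x` by successively joining two cycles, and the
cycles of `x` refine those of `y`. On the other side, for `a < b` in one block of a noncrossing
`τ`, cutting that block into its elements in `(a, b]` and the others gives a noncrossing
partition whose `π` is `π(τ) (a b)`. Going down from `c = π(⊤)` shows that every `x ≤ c` is
some `π(σ)`; and when `σ < τ` the cut can be chosen to stay above `σ`, which gives
`π(σ) ≤ π(τ)` by induction on `ℓ(π(τ))`.
-/

open Equiv Equiv.Perm Function Set

namespace Setoid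

variable {α : Type*}

theorem card_quotient_le_of_le [Finite α] {r s : Setoid α} (h : r ≤ s) :
    Nat.card (Quotient s) ≤ Nat.card (Quotient r) :=
  Nat.card_le_card_of_surjective (map_of_le h) fun q =>
    q.inductionOn fun z => ⟨Quotient.mk r z, rfl⟩

theorem card_quotient_add_one_of_merge [Finite α] {r s : Setoid α} {a b : α} (hab : ¬ r a b)
    (hs : ∀ x y, s x y ↔ r x y ∨ (r x a ∧ r y b) ∨ (r x b ∧ r y a)) :
    Nat.card (Quotient s) + 1 = Nat.card (Quotient r) := by
  classical
  have hrs : r ≤ s := fun x y h => (hs x y).2 (Or.inl h)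
  let g : Quotient r → Option (Quotient s) := fun q =>
    if q = Quotient.mk r b then none else some (map_of_le hrs q)
  have hg : Bijective g := by
    constructor
    · refine fun q₁ q₂ => Quotient.inductionOn₂ q₁ q₂ fun x y hxy => ?_
      by_cases hx : Quotient.mk r x = Quotient.mk r b <;>
        by_cases hy : Quotient.mk r y = Quotient.mk r b <;>
        simp only [g, hx, hy, if_true, if_false, reduceCtorEq, Option.some.injEq] at hxy
      · rw [hx, hy]
      · rw [Quotient.eq] at hx hy
        rcases (hs x y).1 (Quotient.exact hxy) with h | ⟨-, h⟩ | ⟨h, -⟩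
        · exact Quotient.sound h
        · exact absurd h hy
        · exact absurd h hx
    · rintro (_ | q)
      · exact ⟨Quotient.mk r b, if_pos rfl⟩
      · refine q.inductionOn fun z => ?_
        by_cases hz : r z b
        · refine ⟨Quotient.mk r a, ?_⟩
          simp only [g, Quotient.eq, hab, if_false]
          exact congrArg some (Quotient.sound ((hs a z).2 (Or.inr (Or.inl ⟨r.refl a, hz⟩))))
        · exact ⟨Quotient.mk r z, by simp only [g, Quotient.eq, hz, if_false]; rfl⟩
  rw [← Finite.card_option, Nat.card_eq_of_bijective g hg]

end Setoid

namespace Equiv.Perm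

variable {α : Type*} {f : Perm α} {a b x y : α}

theorem SameCycle.mem_of_mapsTo [Finite α] {s : Set α} (hs : MapsTo f s s)
    (h : f.SameCycle x y) (hx : x ∈ s) : y ∈ s := by
  obtain ⟨i, rfl⟩ := h.exists_nat_pow_eq
  exact hs.perm_pow i hx

/-- The number of cycles of `f`, fixed points included. -/
noncomputable def numCycles (f : Perm α) : ℕ := Nat.card (Quotient (SameCycle.setoid f))

theorem numCycles_one : numCycles (1 : Perm α) = Nat.card α := by
  have : SameCycle.setoid (1 : Perm α) = ⊥ := Setoid.ext fun _ _ => sameCycle_one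
  rw [numCycles, this, Nat.card_congr Setoid.quotientBotEquiv]

theorem numCycles_le_card [Finite α] (f : Perm α) : numCycles f ≤ Nat.card α :=
  Nat.card_le_card_of_surjective _ Quotient.mk_surjective

variable [DecidableEq α]

theorem SameCycle.swap_apply (h : f.SameCycle a b) (x : α) : f.SameCycle x (swap a b x) := by
  rw [swap_apply_def]
  split_ifs with hxa hxb
  · exact hxa ▸ h
  · exact hxb ▸ h.symm
  · exact .refl f x

theorem SameCycle.of_mul_swap [Finite α] (hab : f.SameCycle a b)
    (h : (f * swap a b).SameCycle x y) : f.SameCycle x y :=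
  h.mem_of_mapsTo (s := {z | f.SameCycle x z})
    (fun z hz => by
      simp only [mem_ofPred_eq, mul_apply, sameCycle_apply_right]
      exact hz.trans (hab.swap_apply z)) (.refl f x)

theorem sameCycle_mul_swap_of_not_sameCycle [Finite α] (hab : ¬ f.SameCycle a b) :
    (f * swap a b).SameCycle a b := by
  set g := f * swap a b
  -- Follow the `f`-orbit of `f b`: `g` agrees with `f` on it until it reaches `b`.
  have key : ∀ k : ℕ, g.SameCycle a b ∨ g.SameCycle a ((f ^ k) (f b)) := by
    intro k
    induction k with
    | zero => exact Or.inr ⟨1, by simp [g]⟩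
    | succ k ih =>
      rcases ih with h | h
      · exact Or.inl h
      set z := (f ^ k) (f b)
      by_cases hzb : z = b
      · exact Or.inl (hzb ▸ h)
      have hza : z ≠ a := by
        intro hza
        have hbz : f.SameCycle b z := by
          simp only [z, sameCycle_pow_right, sameCycle_apply_right]
          exact .refl f b
        exact hab (hza ▸ hbz).symm
      refine Or.inr (h.trans ⟨1, ?_⟩)
      simp [g, z, swap_apply_of_ne_of_ne hza hzb, pow_succ']
  obtain ⟨k, hk⟩ := (sameCycle_apply_left.2 (.refl f b)).exists_nat_pow_eq
  rcases key k with h | h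
  · exact h
  · rwa [hk] at h

theorem sameCycle_mul_swap_iff [Finite α] (hab : ¬ f.SameCycle a b) :
    (f * swap a b).SameCycle x y ↔
      f.SameCycle x y ∨ (f.SameCycle x a ∧ f.SameCycle y b) ∨
        (f.SameCycle x b ∧ f.SameCycle y a) := by
  set g := f * swap a b
  have hg : g.SameCycle a b := sameCycle_mul_swap_of_not_sameCycle hab
  have hfg : ∀ {x y}, f.SameCycle x y → g.SameCycle x y := fun h =>
    hg.of_mul_swap (by rwa [mul_swap_mul_self])
  constructor
  · intro h
    by_cases hx : f.SameCycle x a ∨ f.SameCycle x b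
    · have hy : f.SameCycle y a ∨ f.SameCycle y b := by
        refine h.mem_of_mapsTo (s := {z | f.SameCycle z a ∨ f.SameCycle z b}) (fun z hz => ?_) hx
        simp only [mem_ofPred_eq, g, mul_apply, sameCycle_apply_left]
        rw [swap_apply_def]
        split_ifs
        exacts [Or.inr (.refl f b), Or.inl (.refl f a), hz]
      rcases hx with hx | hx <;> rcases hy with hy | hy
      · exact Or.inl (hx.trans hy.symm)
      · exact Or.inr (Or.inl ⟨hx, hy⟩)
      · exact Or.inr (Or.inr ⟨hx, hy⟩)
      · exact Or.inl (hx.trans hy.symm)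
    · refine Or.inl (h.mem_of_mapsTo (s := {z | f.SameCycle x z}) (fun z hz => ?_) (.refl f x))
      have hza : z ≠ a := by rintro rfl; exact hx (Or.inl hz)
      have hzb : z ≠ b := by rintro rfl; exact hx (Or.inr hz)
      simpa only [mem_ofPred_eq, g, mul_apply, swap_apply_of_ne_of_ne hza hzb,
        sameCycle_apply_right] using hz
  · rintro (h | ⟨hxa, hyb⟩ | ⟨hxb, hya⟩)
    · exact hfg h
    · exact (hfg hxa).trans (hg.trans (hfg hyb).symm)
    · exact (hfg hxb).trans (hg.symm.trans (hfg hya).symm)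

theorem numCycles_mul_swap_add_one [Finite α] (hab : ¬ f.SameCycle a b) :
    numCycles (f * swap a b) + 1 = numCycles f :=
  Setoid.card_quotient_add_one_of_merge hab fun _ _ => sameCycle_mul_swap_iff hab

theorem numCycles_le_numCycles_mul_swap [Finite α] (hab : f.SameCycle a b) :
    numCycles f ≤ numCycles (f * swap a b) :=
  Setoid.card_quotient_le_of_le fun _ _ => hab.of_mul_swap

theorem numCycles_le_numCycles_mul_swap_add_one [Finite α] (f : Perm α) (a b : α) :
    numCycles f ≤ numCycles (f * swap a b) + 1 := by
  by_cases h : f.SameCycle a b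
  · exact (numCycles_le_numCycles_mul_swap h).trans (Nat.le_succ _)
  · exact (numCycles_mul_swap_add_one h).ge

end Equiv.Perm

section ReflLength

variable {n : ℕ} {x : Perm (Fin n)} {a b : Fin n}

theorem reflLength_prod_le_length {l : List (Perm (Fin n))} (hl : ∀ t ∈ l, t.IsSwap) :
    reflLength l.prod ≤ l.length :=
  Nat.sInf_le ⟨l, hl, rfl, rfl⟩

theorem exists_prod_eq_length_eq_reflLength (x : Perm (Fin n)) :
    ∃ l : List (Perm (Fin n)), (∀ t ∈ l, t.IsSwap) ∧ l.prod = x ∧ l.length = reflLength x :=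
  Nat.sInf_mem
    (s := {k | ∃ l : List (Perm (Fin n)), (∀ t ∈ l, t.IsSwap) ∧ l.prod = x ∧ l.length = k})
    ⟨_, (swapFactors x).1, (swapFactors x).2.2, (swapFactors x).2.1, rfl⟩

theorem reflLength_one : reflLength (1 : Perm (Fin n)) = 0 :=
  Nat.le_zero.1 (reflLength_prod_le_length (l := []) (by simp))

theorem reflLength_eq_zero : reflLength x = 0 ↔ x = 1 := by
  refine ⟨fun h => ?_, fun h => h ▸ reflLength_one⟩
  obtain ⟨l, -, rfl, hl⟩ := exists_prod_eq_length_eq_reflLength x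
  rw [List.eq_nil_of_length_eq_zero (hl.trans h), List.prod_nil]

theorem reflLength_swap_le (a b : Fin n) : reflLength (swap a b) ≤ 1 := by
  by_cases hab : a = b
  · rw [hab, swap_self, ← Perm.one_def, reflLength_one]
    exact zero_le_one
  · simpa using reflLength_prod_le_length (l := [swap a b]) (by simpa using ⟨a, b, hab, rfl⟩)

theorem reflLength_mul_le (x y : Perm (Fin n)) :
    reflLength (x * y) ≤ reflLength x + reflLength y := by
  obtain ⟨l, hl, rfl, hlx⟩ := exists_prod_eq_length_eq_reflLength x
  obtain ⟨l', hl', rfl, hly⟩ := exists_prod_eq_length_eq_reflLength y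
  rw [← hlx, ← hly, ← List.length_append, ← List.prod_append]
  exact reflLength_prod_le_length fun t ht => (List.mem_append.1 ht).elim (hl t) (hl' t)

theorem sign_eq_neg_one_pow_reflLength (x : Perm (Fin n)) : sign x = (-1) ^ reflLength x := by
  obtain ⟨l, hl, rfl, hlx⟩ := exists_prod_eq_length_eq_reflLength x
  rw [← hlx, sign_prod_list_swap hl]

theorem le_numCycles_prod_add_length {l : List (Perm (Fin n))} (hl : ∀ t ∈ l, t.IsSwap) :
    n ≤ numCycles l.prod + l.length := by
  induction l using List.reverseRecOn with
  | nil => simp [numCycles_one]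
  | append_singleton l t ih =>
    obtain ⟨a, b, -, rfl⟩ := hl t (by simp)
    have := ih fun s hs => hl s (by simp [hs])
    have := numCycles_le_numCycles_mul_swap_add_one l.prod a b
    simp only [List.prod_append, List.prod_singleton, List.length_append, List.length_singleton]
    omega

theorem reflLength_add_numCycles_le (x : Perm (Fin n)) : reflLength x + numCycles x ≤ n := by
  induction hk : n - numCycles x using Nat.strong_induction_on generalizing x with
  | _ k ih =>
  by_cases hx : x = 1
  · simp [hx, reflLength_one, numCycles_one]
  obtain ⟨a, ha⟩ : ∃ a, x a ≠ a := by
    by_contra! h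
    exact hx (Equiv.ext h)
  -- `x a` is a fixed point of `y`, so `x` is `y` with two of its cycles joined.
  set y := x * swap a (x a)
  have hy : ¬ y.SameCycle a (x a) := fun h =>
    ha (h.eq_of_right (show y (x a) = x a by simp [y])).symm
  have hxy : y * swap a (x a) = x := by simp [y, mul_assoc]
  have hc := numCycles_mul_swap_add_one hy
  have hyc := numCycles_le_card y
  have hℓ := reflLength_mul_le y (swap a (x a))
  have := reflLength_swap_le a (x a)
  rw [hxy] at hc hℓ
  rw [Nat.card_eq_fintype_card, Fintype.card_fin] at hyc
  have := ih (n - numCycles y) (by omega) y rfl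
  omega

theorem reflLength_add_numCycles (x : Perm (Fin n)) : reflLength x + numCycles x = n := by
  obtain ⟨l, hl, rfl, hlx⟩ := exists_prod_eq_length_eq_reflLength x
  have := le_numCycles_prod_add_length hl
  have := reflLength_add_numCycles_le l.prod
  omega

theorem reflLength_mul_swap_of_not_sameCycle (h : ¬ x.SameCycle a b) :
    reflLength (x * swap a b) = reflLength x + 1 := by
  have := numCycles_mul_swap_add_one h
  have := reflLength_add_numCycles x
  have := reflLength_add_numCycles (x * swap a b)
  omega

theorem reflLength_swap (hab : a ≠ b) : reflLength (swap a b) = 1 := by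
  simpa [reflLength_one] using
    reflLength_mul_swap_of_not_sameCycle (x := 1) (sameCycle_one.not.2 hab)

theorem reflLength_mul_swap_of_sameCycle (hab : a ≠ b) (h : x.SameCycle a b) :
    reflLength (x * swap a b) + 1 = reflLength x := by
  have := numCycles_le_numCycles_mul_swap h
  have := reflLength_add_numCycles x
  have := reflLength_add_numCycles (x * swap a b)
  have hle := reflLength_mul_le (x * swap a b) (swap a b)
  rw [mul_swap_mul_self, reflLength_swap hab] at hle
  -- The sign `(-1) ^ reflLength` rules out `reflLength (x * swap a b) = reflLength x`.
  have hne : reflLength (x * swap a b) ≠ reflLength x := fun heq => by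
    have hsign := sign_eq_neg_one_pow_reflLength (x * swap a b)
    rw [heq, Perm.sign_mul, sign_swap hab, sign_eq_neg_one_pow_reflLength x, mul_neg_one] at hsign
    exact units_ne_neg_self _ hsign.symm
  omega

end ReflLength

section AbsoluteOrder

variable {n : ℕ} {x y z : Perm (Fin n)} {a b : Fin n}

theorem AbsoluteLe.refl (x : Perm (Fin n)) : AbsoluteLe x x := by
  simp [AbsoluteLe, reflLength_one]

theorem AbsoluteLe.trans (hxy : AbsoluteLe x y) (hyz : AbsoluteLe y z) : AbsoluteLe x z := by
  have h₁ := reflLength_mul_le (x⁻¹ * y) (y⁻¹ * z)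
  have h₂ := reflLength_mul_le x (x⁻¹ * z)
  rw [mul_assoc, mul_inv_cancel_left] at h₁
  rw [mul_inv_cancel_left] at h₂
  unfold AbsoluteLe at *
  omega

theorem absoluteLe_mul_swap (hab : a ≠ b) (h : x.SameCycle a b) :
    AbsoluteLe (x * swap a b) x := by
  rw [AbsoluteLe, mul_inv_rev, inv_mul_cancel_right, swap_inv, reflLength_swap hab]
  exact reflLength_mul_swap_of_sameCycle hab h

/-- Induction down a maximal chain from `y` to `x` in absolute order. -/
theorem AbsoluteLe.induction_mul_swap {motive : Perm (Fin n) → Prop} (base : motive x)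
    (step : ∀ y a b, a ≠ b → y.SameCycle a b → motive (y * swap a b) → motive y)
    (h : AbsoluteLe x y) : motive y := by
  induction hk : reflLength (x⁻¹ * y) generalizing y with
  | zero =>
    rw [reflLength_eq_zero, inv_mul_eq_one] at hk
    rwa [← hk]
  | succ k ih =>
    obtain ⟨l, hl, hprod, hlen⟩ := exists_prod_eq_length_eq_reflLength (x⁻¹ * y)
    -- Drop the last factor `swap a b` of a shortest factorization of `x⁻¹ * y`.
    obtain ⟨l, t, rfl⟩ := (List.eq_nil_or_concat' l).resolve_left (by grind)
    obtain ⟨a, b, hab, rfl⟩ := hl t (by simp)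
    have hy' : x⁻¹ * (y * swap a b) = l.prod := by
      rw [← mul_assoc, ← hprod, List.prod_append, List.prod_singleton, mul_swap_mul_self]
    have h₁ := reflLength_prod_le_length (l := l) fun s hs => hl s (by simp [hs])
    have h₂ := reflLength_mul_le x (x⁻¹ * (y * swap a b))
    have h₃ := reflLength_mul_le (y * swap a b) (swap a b)
    have := reflLength_swap_le a b
    rw [mul_inv_cancel_left] at h₂
    rw [mul_swap_mul_self] at h₃
    rw [← hy'] at h₁
    simp only [List.length_append, List.length_singleton] at hlen
    unfold AbsoluteLe at h
    have hsc : y.SameCycle a b := by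
      by_contra hsc
      have := reflLength_mul_swap_of_not_sameCycle hsc
      omega
    exact step y a b hab hsc (ih (by unfold AbsoluteLe; omega) (by omega))

theorem AbsoluteLe.sameCycle {z w : Fin n} (h : AbsoluteLe x y) (hzw : x.SameCycle z w) :
    y.SameCycle z w :=
  h.induction_mul_swap (motive := fun y => y.SameCycle z w) hzw
    fun _ _ _ _ hab hy => hab.of_mul_swap hy

end AbsoluteOrder

section Noncrossing

variable {n : ℕ} {σ τ : Setoid (Fin n)} {p q v : Perm (Fin n)}

/-- The number of steps from `x` forward to `y` around `0 → 1 → ⋯ → n - 1 → 0`;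
it is `n`, not `0`, for `y = x`. -/
def cyclicDist (x y : Fin n) : ℕ := if x < y then y - x else y + n - x

theorem isPiPerm_iff :
    IsPiPerm σ p ↔ ∀ x, σ x (p x) ∧ ∀ y, σ x y → cyclicDist x (p x) ≤ cyclicDist x y := by
  refine forall_congr' fun x => and_congr_right fun hx => ?_
  constructor
  · rintro ⟨hup, hmax⟩ y hy
    by_cases hlarger : ∃ z, σ x z ∧ x < z
    · obtain ⟨hlt, hmin⟩ := hup hlarger
      by_cases hxy : x < y
      · have := hmin y hy hxy
        unfold cyclicDist; split_ifs; omega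
      · unfold cyclicDist; split_ifs; omega
    · push Not at hlarger
      have := hmax hlarger y hy
      have := hlarger y hy
      have := hlarger _ hx
      unfold cyclicDist; split_ifs <;> omega
  · intro hd
    refine ⟨fun ⟨z, hz, hxz⟩ => ⟨?_, fun y hy hxy => ?_⟩, fun hmax y hy => ?_⟩
    · have := hd z hz
      unfold cyclicDist at this; split_ifs at this <;> omega
    · have := hd y hy
      unfold cyclicDist at this; split_ifs at this <;> omega
    · have hdy := hd y hy
      have := hmax y hy
      have := hmax _ hx
      unfold cyclicDist at hdy; split_ifs at hdy <;> omega

theorem IsPiPerm.unique (hp : IsPiPerm σ p) (hq : IsPiPerm σ q) : p = q := by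
  rw [isPiPerm_iff] at hp hq
  ext x
  have h₁ := (hp x).2 _ (hq x).1
  have h₂ := (hq x).2 _ (hp x).1
  unfold cyclicDist at h₁ h₂; split_ifs at h₁ h₂ <;> omega

theorem IsPiPerm.sameCycle_iff (hp : IsPiPerm σ p) {x y : Fin n} : p.SameCycle x y ↔ σ x y := by
  refine ⟨fun h => h.mem_of_mapsTo (s := {z | σ x z}) (fun z hz => σ.trans hz (hp z).1)
    (σ.refl x), fun hxy => ?_⟩
  rw [isPiPerm_iff] at hp
  induction hd : cyclicDist x y using Nat.strong_induction_on generalizing x with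
  | _ d ih =>
  by_cases hx : x = y
  · exact hx ▸ .refl p x
  by_cases hpx : p x = y
  · exact hpx ▸ sameCycle_apply_right.2 (.refl p x)
  have hlt : cyclicDist (p x) y < d := by
    have := (hp x).2 y hxy
    unfold cyclicDist at this hd ⊢; split_ifs at this hd ⊢ <;> omega
  exact (sameCycle_apply_right.2 (.refl p x)).trans
    (ih _ hlt (σ.trans (σ.symm (hp x).1) hxy) rfl)

theorem isPiPerm_top_finRotate : IsPiPerm (⊤ : Setoid (Fin n)) (finRotate n) := by
  rw [isPiPerm_iff]
  intro x
  refine ⟨trivial, fun y _ => ?_⟩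
  obtain ⟨m, rfl⟩ : ∃ m, n = m + 1 := ⟨n - 1, by have := x.isLt; omega⟩
  have : (finRotate (m + 1) x : ℕ) = if x = Fin.last m then 0 else (x : ℕ) + 1 :=
    coe_finRotate x
  have := Fin.val_last m
  have := @Fin.ext_iff _ x (Fin.last m)
  unfold cyclicDist; split_ifs at * <;> omega

theorem IsNoncrossing.inf (hσ : IsNoncrossing σ) (hτ : IsNoncrossing τ) :
    IsNoncrossing (σ ⊓ τ) := fun a b c d hab hbc hcd hac hbd =>
  ⟨hσ a b c d hab hbc hcd hac.1 hbd.1, hτ a b c d hab hbc hcd hac.2 hbd.2⟩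

theorem isNoncrossing_ker_mem {s : Set (Fin n)} (hs : s.OrdConnected) :
    IsNoncrossing (Setoid.ker (· ∈ s)) := by
  intro a b c d hab hbc hcd hac hbd
  simp only [Setoid.ker_def, eq_iff_iff] at hac hbd ⊢
  constructor
  · exact fun ha => hs.out ha (hac.1 ha) ⟨hab.le, hbc.le⟩
  · exact fun hb => hac.2 (hs.out hb (hbd.1 hb) ⟨hbc.le, hcd.le⟩)

theorem IsNoncrossing.mem_Ioc_iff (hτ : IsNoncrossing τ) {a b x y : Fin n} (hab : τ a b)
    (hxy : τ x y) (hxa : ¬ τ x a) : x ∈ Set.Ioc a b ↔ y ∈ Set.Ioc a b := by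
  suffices key : ∀ {x y}, τ x y → ¬ τ x a → x ∈ Set.Ioc a b → y ∈ Set.Ioc a b from
    ⟨key hxy hxa, key (τ.symm hxy) fun hya => hxa (τ.trans hxy hya)⟩
  intro x y hxy hxa ⟨hax, hxb⟩
  have hxb : x < b := hxb.lt_of_ne fun h => hxa (h ▸ τ.symm hab)
  by_contra hy
  rcases lt_or_gt_of_ne (show y ≠ a from fun h => hxa (h ▸ hxy)) with hya | hay
  · exact hxa (τ.trans hxy (hτ y a x b hya hax hxb (τ.symm hxy) hab))
  · have hby : b < y := lt_of_not_ge fun h => hy ⟨hay, h⟩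
    exact hxa (τ.symm (hτ a x b y hax hxb hby hab hxy))

theorem IsPiPerm.mul_swap (hτ : IsNoncrossing τ) (hv : IsPiPerm τ v) {a b : Fin n}
    (hab : a < b) (hτab : τ a b) :
    IsPiPerm (τ ⊓ Setoid.ker (· ∈ Set.Ioc a b)) (v * swap a b) := by
  have hrel : ∀ x y, (τ ⊓ Setoid.ker (· ∈ Set.Ioc a b)) x y ↔
      τ x y ∧ (a < x ∧ x ≤ b ↔ a < y ∧ y ≤ b) := fun x y => by
    simp only [Setoid.inf_iff_and, Setoid.ker_def, eq_iff_iff, Set.mem_Ioc]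
  rw [isPiPerm_iff] at hv ⊢
  intro x
  simp only [hrel, Perm.mul_apply]
  by_cases hxa : x = a
  · subst hxa
    rw [swap_apply_left]
    obtain ⟨hvb, hbmin⟩ := hv b
    have hd := hbmin x (τ.symm hτab)
    refine ⟨⟨τ.trans hτab hvb, ?_⟩, fun y ⟨hy, hyI⟩ => ?_⟩
    · unfold cyclicDist at hd; split_ifs at hd <;> omega
    · have hdy := hbmin y (τ.trans (τ.symm hτab) hy)
      unfold cyclicDist at hd hdy ⊢; split_ifs at hd hdy ⊢ <;> omega
  by_cases hxb : x = b
  · subst hxb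
    rw [swap_apply_right]
    obtain ⟨hva, hamin⟩ := hv a
    have hd := hamin x hτab
    refine ⟨⟨τ.trans (τ.symm hτab) hva, ?_⟩, fun y ⟨hy, hyI⟩ => ?_⟩
    · unfold cyclicDist at hd; split_ifs at hd <;> omega
    · have hdy := hamin y (τ.trans hτab hy)
      unfold cyclicDist at hd hdy ⊢; split_ifs at hd hdy ⊢ <;> omega
  rw [swap_apply_of_ne_of_ne hxa hxb]
  obtain ⟨hvx, hxmin⟩ := hv x
  refine ⟨⟨hvx, ?_⟩, fun y hy => hxmin y hy.1⟩
  by_cases hxT : τ x a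
  · have hda := hxmin a hxT
    have hdb := hxmin b (τ.trans hxT hτab)
    unfold cyclicDist at hda hdb; split_ifs at hda hdb <;> omega
  · simpa only [Set.mem_Ioc] using hτ.mem_Ioc_iff hτab hvx hxT

theorem IsNoncrossing.exists_le_inf_ker_Ioc (hσ : IsNoncrossing σ) (hτ : IsNoncrossing τ)
    (hle : σ ≤ τ) (hne : ¬ τ ≤ σ) :
    ∃ a b, a < b ∧ τ a b ∧ σ ≤ τ ⊓ Setoid.ker (· ∈ Set.Ioc a b) := by
  obtain ⟨z, w, hzw, hσzw⟩ : ∃ z w, τ z w ∧ ¬ σ z w := by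
    simpa [Setoid.le_def] using hne
  obtain ⟨m, hzm, hm⟩ := wellFounded_lt.has_min {u | τ z u} ⟨z, τ.refl z⟩
  obtain ⟨y, hzy, hmy⟩ : ∃ y, τ z y ∧ ¬ σ m y := by
    by_contra! h
    exact hσzw (σ.trans (σ.symm (h z (τ.refl z))) (h w hzw))
  -- Split along `(a, d]`, where `[c, d]` is the span of the `σ`-block of `y` and `a` is the last
  -- element of the `τ`-block before `c` (it exists since `m < c`): as `σ` is noncrossing, every
  -- `σ`-block lies on one side of `(a, d]`.
  obtain ⟨c, hyc, hc⟩ := wellFounded_lt.has_min {u | σ y u} ⟨y, σ.refl y⟩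
  obtain ⟨d, hyd, hd⟩ := wellFounded_gt.has_min {u | σ y u} ⟨y, σ.refl y⟩
  have hmc : m < c := lt_of_le_of_ne (not_lt.1 (hm c (τ.trans hzy (hle hyc))))
    fun h => hmy (h ▸ σ.symm hyc)
  obtain ⟨a, ⟨hza, hac⟩, ha⟩ := wellFounded_gt.has_min {u | τ z u ∧ u < c} ⟨m, hzm, hmc⟩
  have hcd : c ≤ d := not_lt.1 (hd c hyc)
  have hτad : τ a d := τ.trans (τ.symm hza) (τ.trans hzy (hle hyd))
  refine ⟨a, d, hac.trans_le hcd, hτad, fun u v huv => ⟨hle huv, ?_⟩⟩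
  simp only [Setoid.ker_def, eq_iff_iff]
  by_cases hua : τ u a
  swap
  · exact hτ.mem_Ioc_iff hτad (hle huv) hua
  suffices key : ∀ {u v}, σ u v → τ u a → u ∈ Set.Ioc a d → v ∈ Set.Ioc a d from
    ⟨key huv hua, key (σ.symm huv) (τ.trans (τ.symm (hle huv)) hua)⟩
  rintro u v huv hua ⟨hau, hud⟩
  have hcu : c ≤ u := not_lt.1 fun h => ha u ⟨τ.trans hza (τ.symm hua), h⟩ hau
  by_cases hyu : σ y u
  · have hyv := σ.trans hyu huv
    exact ⟨hac.trans_le (not_lt.1 (hc v hyv)), not_lt.1 (hd v hyv)⟩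
  have hcu' : c < u := lt_of_le_of_ne hcu fun h => hyu (h ▸ hyc)
  have hud' : u < d := lt_of_le_of_ne hud fun h => hyu (h ▸ hyd)
  have hcd' : σ c d := σ.trans (σ.symm hyc) hyd
  by_contra hv
  rcases le_or_gt v a with hva | hav
  · exact hyu (σ.trans hyc (σ.trans (σ.symm (hσ v c u d (hva.trans_lt hac) hcu' hud'
      (σ.symm huv) hcd')) (σ.symm huv)))
  · have hdv : d < v := lt_of_not_ge fun h => hv ⟨hav, h⟩
    exact hyu (σ.trans hyc (hσ c u d v hcu' hud' hdv hcd' huv))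

theorem IsPiPerm.absoluteLe_of_le {u : Perm (Fin n)} (hσ : IsNoncrossing σ)
    (hτ : IsNoncrossing τ) (hle : σ ≤ τ) (hu : IsPiPerm σ u) (hv : IsPiPerm τ v) :
    AbsoluteLe u v := by
  induction hk : reflLength v using Nat.strong_induction_on generalizing τ v with
  | _ k ih =>
  by_cases hτσ : τ ≤ σ
  · rw [hu.unique (le_antisymm hle hτσ ▸ hv)]
    exact .refl v
  obtain ⟨a, b, hab, hτab, hσ'⟩ := hσ.exists_le_inf_ker_Ioc hτ hle hτσ
  have hvab : v.SameCycle a b := hv.sameCycle_iff.2 hτab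
  have hℓ := reflLength_mul_swap_of_sameCycle hab.ne hvab
  exact (ih _ (by omega) (hτ.inf (isNoncrossing_ker_mem Set.ordConnected_Ioc)) hσ'
    (hv.mul_swap hτ hab hτab) rfl).trans (absoluteLe_mul_swap hab.ne hvab)

theorem AbsoluteLe.exists_isPiPerm {x y : Perm (Fin n)} (h : AbsoluteLe x y)
    (hτ : IsNoncrossing τ) (hy : IsPiPerm τ y) : ∃ σ, IsNoncrossing σ ∧ IsPiPerm σ x := by
  refine h.induction_mul_swap (motive := fun y => ∀ τ : Setoid (Fin n), IsNoncrossing τ →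
    IsPiPerm τ y → ∃ σ, IsNoncrossing σ ∧ IsPiPerm σ x) (fun τ hτ hx => ⟨τ, hτ, hx⟩) ?_ τ hτ hy
  intro y a b hab hsc ih τ hτ hy
  wlog hlt : a < b generalizing a b
  · exact this b a hab.symm hsc.symm (swap_comm a b ▸ ih) (hab.lt_or_gt.resolve_left hlt)
  exact ih _ (hτ.inf (isNoncrossing_ker_mem Set.ordConnected_Ioc))
    (hy.mul_swap hτ hlt (hy.sameCycle_iff.1 hsc))

end Noncrossing

theorem NC_orderIso_absolute_order_general (n : ℕ)
    (π : NC n → Equiv.Perm (Fin n)) (hπ : ∀ σ : NC n, IsPiPerm σ.val (π σ)) :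
    Function.Injective π ∧
    Set.range π = {x : Equiv.Perm (Fin n) | AbsoluteLe x (finRotate n)} ∧
    ∀ σ τ : NC n, σ ≤ τ ↔ AbsoluteLe (π σ) (π τ) := by
  have hNCtop : IsNoncrossing (⊤ : Setoid (Fin n)) := fun _ _ _ _ _ _ _ _ _ => trivial
  refine ⟨fun σ τ h => Subtype.ext (Setoid.ext fun z w => ?_), ?_, fun σ τ => ⟨?_, ?_⟩⟩
  · rw [← (hπ σ).sameCycle_iff, ← (hπ τ).sameCycle_iff, h]
  · ext x
    refine ⟨?_, fun hx => ?_⟩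
    · rintro ⟨σ, rfl⟩
      exact (hπ σ).absoluteLe_of_le σ.2 hNCtop le_top isPiPerm_top_finRotate
    · obtain ⟨σ, hσ, hx⟩ := hx.exists_isPiPerm hNCtop isPiPerm_top_finRotate
      exact ⟨⟨σ, hσ⟩, (hπ _).unique hx⟩
  · exact fun h => (hπ σ).absoluteLe_of_le σ.2 τ.2 h (hπ τ)
  · exact fun h z w hzw => (hπ τ).sameCycle_iff.1 (h.sameCycle ((hπ σ).sameCycle_iff.2 hzw))

/-- The map `σ ↦ π(σ)` is an order isomorphism from `NC_n` onto the set of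
permutations below the `n`-cycle `(1, 2, …, n)` (here `finRotate n`) in absolute
order: it is injective, its image is exactly `{x : x ≤ c}`, and `σ ≤ τ` in `NC_n`
iff `π(σ) ≤ π(τ)` in absolute order. -/
theorem NC_orderIso_absolute_order (n : ℕ) (hn : 0 < n)
    (π : NC n → Equiv.Perm (Fin n)) (hπ : ∀ σ : NC n, IsPiPerm σ.val (π σ)) :
    Function.Injective π ∧
    Set.range π = {x : Equiv.Perm (Fin n) | AbsoluteLe x (finRotate n)} ∧
    ∀ σ τ : NC n, σ ≤ τ ↔ AbsoluteLe (π σ) (π τ) :=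
  NC_orderIso_absolute_order_general n π hπ
end

section
/- If τ covers σ in the noncrossing partition lattice NC_n, then the permutation π(σ)⁻¹π(τ) is a transposition; consequently, for any saturated chain σ = σ_0 ⋖ σ_1 ⋖ ⋯ ⋖ σ_k = τ in NC_n, each label π(σ_{i−1})⁻¹π(σ_i) is a transposition and the product of these labels in order equals π(σ)⁻¹π(τ). -/
open Equiv

section Merge

variable {α : Type*}

def mergeBlocks (σ : Setoid α) (j m : α) : Setoid α where
  r x y := σ x y ∨ ((σ j x ∨ σ m x) ∧ (σ j y ∨ σ m y))
  iseqv := by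
    refine ⟨fun x => Or.inl (σ.refl' x), ?_, ?_⟩
    · rintro x y (h | ⟨hx, hy⟩)
      · exact Or.inl (σ.symm' h)
      · exact Or.inr ⟨hy, hx⟩
    · rintro x y z (hxy | ⟨hx, hy⟩) (hyz | ⟨hy', hz⟩)
      · exact Or.inl (σ.trans' hxy hyz)
      · exact Or.inr ⟨hy'.imp (σ.trans' · (σ.symm' hxy)) (σ.trans' · (σ.symm' hxy)), hz⟩
      · exact Or.inr ⟨hx, hy.imp (σ.trans' · hyz) (σ.trans' · hyz)⟩
      · exact Or.inr ⟨hx, hz⟩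

variable {σ τ : Setoid α} {j m x y : α}

theorem le_mergeBlocks : σ ≤ mergeBlocks σ j m := fun _ _ h => Or.inl h

theorem mergeBlocks_rel_of_rel_or_rel (hx : σ j x ∨ σ m x) (hy : σ j y ∨ σ m y) :
    mergeBlocks σ j m x y :=
  Or.inr ⟨hx, hy⟩

theorem mergeBlocks_le (hle : σ ≤ τ) (hjm : τ j m) : mergeBlocks σ j m ≤ τ := by
  have hD : ∀ {x}, σ j x ∨ σ m x → τ j x := fun hx =>
    hx.elim (fun h => hle h) fun h => τ.trans' hjm (hle h)
  rintro x y (hxy | ⟨hx, hy⟩)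
  · exact hle hxy
  · exact τ.trans' (τ.symm' (hD hx)) (hD hy)

theorem rel_right_of_mergeBlocks (hx : σ j x) (hxy : mergeBlocks σ j m x y) (hn : ¬σ x y) :
    σ m y :=
  (hxy.resolve_left hn).2.resolve_left fun hy => hn (σ.trans' (σ.symm' hx) hy)

theorem rel_left_of_mergeBlocks (hx : σ m x) (hxy : mergeBlocks σ j m x y) (hn : ¬σ x y) :
    σ j y :=
  (hxy.resolve_left hn).2.resolve_right fun hy => hn (σ.trans' (σ.symm' hx) hy)

theorem rel_of_mergeBlocks (hj : ¬σ j x) (hm : ¬σ m x) (hxy : mergeBlocks σ j m x y) : σ x y :=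
  hxy.resolve_right fun h => h.1.elim hj hm

end Merge

/-- The block of `m` sits inside a single gap of the block of `j`. -/
structure NestedBlocks {α : Type*} [LinearOrder α] (σ : Setoid α) (j m : α) : Prop where
  right_min : ∀ c, σ m c → m ≤ c
  lt : j < m
  not_rel : ¬σ j m
  lt_of_lt_left : ∀ b c, σ j b → σ m c → m < b → c < b

namespace IsPiPerm

variable {n : ℕ} {σ τ : Setoid (Fin n)} {p q : Perm (Fin n)} {x y : Fin n}

theorem rel_apply (hp : IsPiPerm σ p) (x : Fin n) : σ x (p x) := (hp x).1

theorem lt_apply (hp : IsPiPerm σ p) (hxy : σ x y) (hlt : x < y) : x < p x :=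
  ((hp x).2.1 ⟨y, hxy, hlt⟩).1

theorem apply_le (hp : IsPiPerm σ p) (hxy : σ x y) (hlt : x < y) : p x ≤ y :=
  ((hp x).2.1 ⟨y, hxy, hlt⟩).2 y hxy hlt

theorem apply_le_of_isTop (hp : IsPiPerm σ p) (htop : ∀ y, σ x y → y ≤ x) (hxy : σ x y) :
    p x ≤ y :=
  (hp x).2.2 htop y hxy

theorem apply_eq_of_lt (hp : IsPiPerm σ p) (hxy : σ x y) (hlt : x < y)
    (hmin : ∀ z, σ x z → x < z → y ≤ z) : p x = y :=
  le_antisymm (hp.apply_le hxy hlt) (hmin _ (hp.rel_apply x) (hp.lt_apply hxy hlt))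

theorem apply_eq_of_isTop (hp : IsPiPerm σ p) (hxy : σ x y) (htop : ∀ z, σ x z → z ≤ x)
    (hmin : ∀ z, σ x z → y ≤ z) : p x = y :=
  le_antisymm (hp.apply_le_of_isTop htop hxy) (hmin _ (hp.rel_apply x))

theorem apply_eq_of_le_of_lt (hp : IsPiPerm σ p) (hq : IsPiPerm τ q) (hle : σ ≤ τ)
    (hx : x < p x) (hnew : ∀ y, τ x y → ¬σ x y → x < y → p x ≤ y) : q x = p x :=
  hq.apply_eq_of_lt (hle (hp.rel_apply x)) hx fun y hxy hlt => by
    by_cases h : σ x y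
    · exact hp.apply_le h hlt
    · exact hnew y hxy h hlt

theorem apply_eq_of_le_of_isTop (hp : IsPiPerm σ p) (hq : IsPiPerm τ q) (hle : σ ≤ τ)
    (htop : ∀ y, τ x y → y ≤ x) (hnew : ∀ y, τ x y → ¬σ x y → p x ≤ y) : q x = p x :=
  hq.apply_eq_of_isTop (hle (hp.rel_apply x)) htop fun y hxy => by
    by_cases h : σ x y
    · exact hp.apply_le_of_isTop (fun z hz => htop z (hle hz)) h
    · exact hnew y hxy h

theorem apply_eq_of_le_of_rel_imp (hp : IsPiPerm σ p) (hq : IsPiPerm τ q) (hle : σ ≤ τ)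
    (hx : ∀ y, τ x y → σ x y) : q x = p x := by
  by_cases h : ∃ y, σ x y ∧ x < y
  · obtain ⟨y, hxy, hlt⟩ := h
    exact hp.apply_eq_of_le_of_lt hq hle (hp.lt_apply hxy hlt) fun y hy hn => absurd (hx y hy) hn
  · push Not at h
    exact hp.apply_eq_of_le_of_isTop hq hle (fun y hy => h y (hx y hy))
      fun y hy hn => absurd (hx y hy) hn

end IsPiPerm

theorem Equiv.Perm.eq_of_apply_eq_of_ne {β : Type*} {f g : Perm β} (a : β)
    (h : ∀ x, x ≠ a → f x = g x) : f = g := by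
  ext x
  by_cases hx : x = a
  · subst hx
    by_contra hne
    have hb : g.symm (f x) ≠ x := fun e =>
      hne ((congrArg g e).symm.trans (g.apply_symm_apply (f x))).symm
    exact hb (f.injective (by rw [h _ hb, g.apply_symm_apply]))
  · exact h x hx

namespace NestedBlocks

variable {n : ℕ} {σ : Setoid (Fin n)} {j m u v x : Fin n} {p q : Perm (Fin n)}

theorem pi_mergeBlocks_apply_left_of_lt_gap (h : NestedBlocks σ j m) (hp : IsPiPerm σ p)
    (hq : IsPiPerm (mergeBlocks σ j m) q) (hv : IsGreatest {b | σ j b ∧ b < m} v)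
    (hx : σ j x) (hxv : x < v) : q x = p x := by
  have hxv' : σ x v := σ.trans' (σ.symm' hx) hv.1.1
  refine hp.apply_eq_of_le_of_lt hq le_mergeBlocks (hp.lt_apply hxv' hxv) fun y hxy hn _ => ?_
  calc p x ≤ v := hp.apply_le hxv' hxv
    _ ≤ m := hv.1.2.le
    _ ≤ y := h.right_min y (rel_right_of_mergeBlocks hx hxy hn)

theorem pi_mergeBlocks_apply_left_of_gt (h : NestedBlocks σ j m) (hp : IsPiPerm σ p)
    (hq : IsPiPerm (mergeBlocks σ j m) q) (hx : σ j x) (hmx : m < x) : q x = p x := by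
  have hnew : ∀ y, mergeBlocks σ j m x y → ¬σ x y → y < x := fun y hxy hn =>
    h.lt_of_lt_left x y hx (rel_right_of_mergeBlocks hx hxy hn) hmx
  by_cases hup : ∃ y, σ x y ∧ x < y
  · obtain ⟨y, hxy, hlt⟩ := hup
    exact hp.apply_eq_of_le_of_lt hq le_mergeBlocks (hp.lt_apply hxy hlt)
      fun y hxy hn hlt => absurd (hnew y hxy hn) hlt.not_gt
  · push Not at hup
    refine hp.apply_eq_of_le_of_isTop hq le_mergeBlocks (fun y hxy => ?_) fun y hxy hn => ?_
    · by_cases hn : σ x y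
      · exact hup y hn
      · exact (hnew y hxy hn).le
    · calc p x ≤ j := hp.apply_le_of_isTop hup (σ.symm' hx)
        _ ≤ m := h.lt.le
        _ ≤ y := h.right_min y (rel_right_of_mergeBlocks hx hxy hn)

theorem pi_mergeBlocks_apply_right_of_lt_max (h : NestedBlocks σ j m) (hp : IsPiPerm σ p)
    (hq : IsPiPerm (mergeBlocks σ j m) q) (hu : IsGreatest {c | σ m c} u) (hx : σ m x)
    (hxu : x < u) : q x = p x := by
  have hxu' : σ x u := σ.trans' (σ.symm' hx) hu.1
  refine hp.apply_eq_of_le_of_lt hq le_mergeBlocks (hp.lt_apply hxu' hxu) fun y hxy hn hlt => ?_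
  exact (h.lt_of_lt_left y (p x) (rel_left_of_mergeBlocks hx hxy hn)
    (σ.trans' hx (hp.rel_apply x)) ((h.right_min x hx).trans_lt hlt)).le

theorem pi_mergeBlocks_apply_gap (h : NestedBlocks σ j m) (hp : IsPiPerm σ p)
    (hq : IsPiPerm (mergeBlocks σ j m) q) (hv : IsGreatest {b | σ j b ∧ b < m} v)
    (hu : IsGreatest {c | σ m c} u) : q v = p u := by
  have hpu : p u = m := hp.apply_eq_of_isTop (σ.symm' hu.1)
    (fun y hy => hu.2 (σ.trans' hu.1 hy)) fun y hy => h.right_min y (σ.trans' hu.1 hy)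
  rw [hpu]
  refine hq.apply_eq_of_lt (mergeBlocks_rel_of_rel_or_rel (Or.inl hv.1.1) (Or.inr (σ.refl' m)))
    hv.1.2 fun y hvy hlt => ?_
  by_cases hn : σ v y
  · by_contra hym
    exact (hv.2 ⟨σ.trans' hv.1.1 hn, not_le.1 hym⟩).not_gt hlt
  · exact h.right_min y (rel_right_of_mergeBlocks hv.1.1 hvy hn)

theorem pi_mergeBlocks_eq_mul_swap (h : NestedBlocks σ j m) (hp : IsPiPerm σ p)
    (hq : IsPiPerm (mergeBlocks σ j m) q) (hv : IsGreatest {b | σ j b ∧ b < m} v)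
    (hu : IsGreatest {c | σ m c} u) : q = p * swap v u := by
  -- Agreement off `u` suffices: both sides are permutations.
  refine Perm.eq_of_apply_eq_of_ne u fun x hxu => ?_
  rw [Perm.mul_apply]
  by_cases hxv : x = v
  · rw [hxv, swap_apply_left]
    exact h.pi_mergeBlocks_apply_gap hp hq hv hu
  rw [swap_apply_of_ne_of_ne hxv hxu]
  by_cases hjx : σ j x
  · rcases lt_trichotomy x m with hxm | rfl | hmx
    · exact h.pi_mergeBlocks_apply_left_of_lt_gap hp hq hv hjx ((hv.2 ⟨hjx, hxm⟩).lt_of_ne hxv)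
    · exact absurd hjx h.not_rel
    · exact h.pi_mergeBlocks_apply_left_of_gt hp hq hjx hmx
  by_cases hmx : σ m x
  · exact h.pi_mergeBlocks_apply_right_of_lt_max hp hq hu hmx ((hu.2 hmx).lt_of_ne hxu)
  exact hp.apply_eq_of_le_of_rel_imp hq le_mergeBlocks fun y => rel_of_mergeBlocks hjx hmx

theorem isSwap_inv_mul_pi_mergeBlocks (h : NestedBlocks σ j m) (hp : IsPiPerm σ p)
    (hq : IsPiPerm (mergeBlocks σ j m) q) : (p⁻¹ * q).IsSwap := by
  obtain ⟨v, hv, hvmax⟩ := Set.exists_max_image {b | σ j b ∧ b < m} id (Set.toFinite _)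
    ⟨j, σ.refl' j, h.lt⟩
  obtain ⟨u, hu, humax⟩ := Set.exists_max_image {c | σ m c} id (Set.toFinite _) ⟨m, σ.refl' m⟩
  refine ⟨v, u, (hv.2.trans_le (h.right_min u hu)).ne, ?_⟩
  rw [h.pi_mergeBlocks_eq_mul_swap hp hq ⟨hv, hvmax⟩ ⟨hu, humax⟩, inv_mul_cancel_left]

end NestedBlocks

section Cover

variable {n : ℕ} {σ τ : Setoid (Fin n)} {j m : Fin n}

theorem IsNoncrossing.nestedBlocks (hσ : IsNoncrossing σ) (hm : ∀ c, σ m c → m ≤ c) (hlt : j < m)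
    (hn : ¬σ j m) : NestedBlocks σ j m where
  right_min := hm
  lt := hlt
  not_rel := hn
  lt_of_lt_left b c hb hc hmb := by
    by_contra! hbc
    rcases hbc.eq_or_lt with rfl | hbc
    · exact hn (σ.trans' hb (σ.symm' hc))
    · exact hn (hσ j m b c hlt hmb hbc hb hc)

theorem exists_minimal_pair_of_lt (h : σ < τ) :
    ∃ j m, j < m ∧ τ j m ∧ ¬σ j m ∧ ∀ z, τ j z → ¬σ j z → m ≤ z := by
  obtain ⟨x, y, hxy, hn⟩ : ∃ x y, τ x y ∧ ¬σ x y := by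
    by_contra! hc
    exact h.not_ge fun x y => hc x y
  obtain ⟨j, hxj, hjmin⟩ := Set.exists_min_image {z | τ x z} id (Set.toFinite _) ⟨x, τ.refl' x⟩
  obtain ⟨m, ⟨hjm, hnm⟩, hmmin⟩ :=
    Set.exists_min_image {z | τ j z ∧ ¬σ j z} id (Set.toFinite _) (by
      by_cases hjx : σ j x
      · exact ⟨y, τ.trans' (τ.symm' hxj) hxy, fun hjy => hn (σ.trans' (σ.symm' hjx) hjy)⟩
      · exact ⟨x, τ.symm' hxj, hjx⟩)
  have hlt : j < m := (hjmin m (τ.trans' hxj hjm)).lt_of_ne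
    fun e => hnm ((show j = m from e) ▸ σ.refl' j)
  exact ⟨j, m, hlt, hjm, hnm, fun z hz hnz => hmmin z ⟨hz, hnz⟩⟩

theorem isNoncrossing_mergeBlocks (hσ : IsNoncrossing σ) (hτ : IsNoncrossing τ) (hle : σ ≤ τ)
    (hjm : τ j m) (hlt : j < m) (hn : ¬σ j m) (hmin : ∀ z, τ j z → ¬σ j z → m ≤ z) :
    IsNoncrossing (mergeBlocks σ j m) := by
  have hD : ∀ {x}, σ j x ∨ σ m x → τ j x := fun hx =>
    mergeBlocks_le hle hjm (mergeBlocks_rel_of_rel_or_rel (Or.inl (σ.refl' j)) hx)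
  have hC : ∀ {c}, σ m c → m ≤ c := fun hc =>
    hmin _ (hD (Or.inr hc)) fun hjc => hn (σ.trans' hjc (σ.symm' hc))
  intro a b c d hab hbc hcd hac hbd
  rcases hac with hac | ⟨ha, hc⟩ <;> rcases hbd with hbd | ⟨hb, hd⟩
  · exact le_mergeBlocks (hσ a b c d hab hbc hcd hac hbd)
  · -- `τ` is noncrossing, so `a` joins the `τ`-block of `j`: it is in the block of `j` or `a ≥ m`.
    have hτab := hτ a b c d hab hbc hcd (hle hac) (τ.trans' (τ.symm' (hD hb)) (hD hd))
    refine mergeBlocks_rel_of_rel_or_rel ?_ hb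
    by_cases hja : σ j a
    · exact Or.inl hja
    rcases (hmin a (τ.trans' (hD hb) (τ.symm' hτab)) hja).eq_or_lt with rfl | hma
    · exact Or.inr (σ.refl' _)
    rcases hb with hjb | hmb
    · exact absurd (hσ j a b c (hlt.trans hma) hab hbc hjb hac) hja
    · exact Or.inr (hσ m a b c hma hab hbc hmb hac)
  · by_cases hac : σ a c
    · exact le_mergeBlocks (hσ a b c d hab hbc hcd hac hbd)
    by_cases hb : σ j b ∨ σ m b
    · exact mergeBlocks_rel_of_rel_or_rel ha hb
    push Not at hb
    -- `a` and `c` lie in different blocks among those of `j` and `m`; either way `b d` crosses one.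
    exfalso
    rcases ha with hja | hma
    · have hmc : σ m c := hc.resolve_left fun hjc => hac (σ.trans' (σ.symm' hja) hjc)
      have hτab := hτ a b c d hab hbc hcd (τ.trans' (τ.symm' (hle hja)) (hD (Or.inr hmc)))
        (hle hbd)
      have hmb : m < b := (hmin b (τ.trans' (hle hja) hτab) hb.1).lt_of_ne
        fun e => hb.2 (e ▸ σ.refl' m)
      exact hb.2 (hσ m b c d hmb hbc hcd hmc hbd)
    · have hjc : σ j c := hc.resolve_right fun hmc => hac (σ.trans' (σ.symm' hma) hmc)
      have hjb : j < b := hlt.trans_le ((hC hma).trans hab.le)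
      exact hb.1 (hσ j b c d hjb hbc hcd hjc hbd)
  · exact mergeBlocks_rel_of_rel_or_rel ha hb

end Cover

namespace NC

variable {n : ℕ} {σ τ : NC n}

theorem exists_nestedBlocks_of_covBy (h : σ ⋖ τ) :
    ∃ j m, NestedBlocks σ.1 j m ∧ τ.1 = mergeBlocks σ.1 j m := by
  obtain ⟨j, m, hlt, hjm, hn, hmin⟩ := exists_minimal_pair_of_lt (show σ.1 < τ.1 from h.lt)
  have hle : σ.1 ≤ τ.1 := h.le
  let ρ : NC n := ⟨mergeBlocks σ.1 j m, isNoncrossing_mergeBlocks σ.2 τ.2 hle hjm hlt hn hmin⟩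
  have hρ : ρ = τ := (h.eq_or_eq (c := ρ) le_mergeBlocks (mergeBlocks_le hle hjm)).resolve_left
    fun e => hn (by
      rw [← congrArg Subtype.val e]
      exact mergeBlocks_rel_of_rel_or_rel (Or.inl (σ.1.refl' j)) (Or.inr (σ.1.refl' m)))
  refine ⟨j, m, σ.2.nestedBlocks (fun c hc => ?_) hlt hn, congrArg Subtype.val hρ.symm⟩
  exact hmin c (τ.1.trans' hjm (hle hc)) fun hjc => hn (σ.1.trans' hjc (σ.1.symm' hc))

theorem isSwap_inv_mul_of_covBy {p q : Perm (Fin n)} (h : σ ⋖ τ) (hp : IsPiPerm σ.1 p)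
    (hq : IsPiPerm τ.1 q) : (p⁻¹ * q).IsSwap := by
  obtain ⟨j, m, hjm, hτ⟩ := exists_nestedBlocks_of_covBy h
  exact hjm.isSwap_inv_mul_pi_mergeBlocks hp (hτ ▸ hq)

end NC

/-- If `τ` covers `σ` in `NC_n` then the label `π(σ)⁻¹ π(τ)` is a transposition;
consequently, for any saturated chain `σ = c 0 ⋖ c 1 ⋖ ⋯ ⋖ c k = τ` in `NC_n`,
each label `π(c (i-1))⁻¹ π(c i)` is a transposition and the ordered product of the
labels equals `π(σ)⁻¹ π(τ)`. -/
theorem NC_cover_labels (n : ℕ)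
    (π : NC n → Equiv.Perm (Fin n)) (hπ : ∀ σ : NC n, IsPiPerm σ.val (π σ)) :
    (∀ σ τ : NC n, σ ⋖ τ → ((π σ)⁻¹ * π τ).IsSwap) ∧
    ∀ (k : ℕ) (c : ℕ → NC n), (∀ i < k, c i ⋖ c (i + 1)) →
      (∀ i < k, ((π (c i))⁻¹ * π (c (i + 1))).IsSwap) ∧
      ((List.range k).map fun i => (π (c i))⁻¹ * π (c (i + 1))).prod
        = (π (c 0))⁻¹ * π (c k) := by
  have hswap : ∀ σ τ : NC n, σ ⋖ τ → ((π σ)⁻¹ * π τ).IsSwap := fun σ τ h =>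
    NC.isSwap_inv_mul_of_covBy h (hπ σ) (hπ τ)
  refine ⟨hswap, fun k c hc => ⟨fun i hi => hswap _ _ (hc i hi), ?_⟩⟩
  simpa only [div_inv_eq_mul] using List.prod_range_div' k fun i => (π (c i))⁻¹
end

section
/- The number of parking functions of length n is (n+1)^{n−1}. -/
/-!
Pollak's circular argument. For `g : Fin n → ZMod (n + 1)`, exactly one common shift
`i ↦ g i - d` is a parking function (with values moved down by one): by the cycle lemma
applied to the surplus `t ↦ #{(i, j) | j < t, g i = j} - t`, which drops by exactly `1` over
each period `n + 1`. Hence `(d, a) ↦ a + d` is a bijection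
`ZMod (n + 1) × {parking functions} ≃ (Fin n → ZMod (n + 1))`.
-/

/-- A parking function of length `n`: a sequence of elements of `[n] = {1, …, n}`
whose nondecreasing rearrangement `b_1 ≤ ⋯ ≤ b_n` satisfies `b_i ≤ i` for all `i`. -/
def IsParkingFunction (n : ℕ) (a : Fin n → ℕ) : Prop :=
  (∀ i, a i ∈ Finset.Icc 1 n) ∧
  ∃ e : Equiv.Perm (Fin n), (Monotone fun i => a (e i)) ∧
    ∀ i : Fin n, a (e i) ≤ (i : ℕ) + 1

open Finset

lemma Equiv.Perm.card_filter_comp {α : Type*} [Fintype α] (e : Equiv.Perm α) (p : α → Prop)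
    [DecidablePred p] : #{i | p (e i)} = #{i | p i} :=
  card_equiv e (by simp)

lemma Fin.le_card_filter_le_of_le_succ {n : ℕ} {b : Fin n → ℕ} (hb : ∀ i, b i ≤ i + 1)
    {k : ℕ} (hk : k ≤ n) : k ≤ #{i | b i ≤ k} := by
  calc k = #{i : Fin n | i < k} := by rw [Fin.card_filter_val_lt, min_eq_right hk]
    _ ≤ #{i | b i ≤ k} := card_le_card fun i hi => by
      simp only [mem_filter, mem_univ, true_and] at hi ⊢
      exact (hb i).trans hi

lemma Monotone.le_succ_of_le_card_filter_le {n : ℕ} {b : Fin n → ℕ} (hmono : Monotone b)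
    (hcard : ∀ k ≤ n, k ≤ #{i | b i ≤ k}) (i : Fin n) : b i ≤ i + 1 := by
  by_contra! hlt
  have hcount : #{j | b j ≤ i + 1} ≤ #{j : Fin n | j < (i : ℕ)} := card_le_card fun j hj => by
    simp only [mem_filter, mem_univ, true_and] at hj ⊢
    by_contra! hij
    have := hmono (Fin.le_def.mpr hij)
    omega
  have := (hcard (i + 1) i.2).trans hcount
  rw [Fin.card_filter_val_lt] at this
  omega

theorem cycle_lemma {m : ℕ} (hm : 0 < m) (S : ℕ → ℤ) (hS : ∀ t, S (t + m) = S t - 1) :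
    ∃! r, r < m ∧ ∀ k < m, S r ≤ S (r + k) := by
  classical
  refine existsUnique_of_exists_of_unique ?_ ?_
  · have hmin : ∃ r, r < m ∧ ∀ j < m, S r ≤ S j := by
      obtain ⟨r, hr, hle⟩ := exists_min_image (range m) S ⟨0, mem_range.mpr hm⟩
      exact ⟨r, mem_range.mp hr, fun j hj => hle j (mem_range.mpr hj)⟩
    obtain ⟨hrm, hr⟩ := Nat.find_spec hmin
    have hbefore : ∀ j < Nat.find hmin, S (Nat.find hmin) < S j := fun j hj => by
      by_contra! hle
      exact Nat.find_min hmin hj ⟨hj.trans hrm, fun i hi => hle.trans (hr i hi)⟩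
    -- Start at the first minimiser on `[0, m)`: a window wrapping past `m` ends at an earlier
    -- index, where `S` is strictly larger, and the wrap costs exactly `1`.
    refine ⟨Nat.find hmin, hrm, fun k hk => ?_⟩
    rcases lt_or_ge (Nat.find hmin + k) m with hlt | hge
    · exact hr _ hlt
    · have hwrap := hS (Nat.find hmin + k - m)
      rw [Nat.sub_add_cancel hge] at hwrap
      have := hbefore (Nat.find hmin + k - m) (by omega)
      omega
  · intro x y ⟨hxm, hx⟩ ⟨hym, hy⟩
    wlog hxy : x ≤ y generalizing x y
    · exact (this y x hym hy hxm hx (by omega)).symm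
    by_contra hne
    -- Two good starting points `x < y` would give `S x ≤ S y ≤ S (x + m) = S x - 1`.
    have h1 := hx (y - x) (by omega)
    have h2 := hy (m - (y - x)) (by omega)
    rw [Nat.add_sub_cancel' hxy] at h1
    rw [show y + (m - (y - x)) = x + m by omega, hS] at h2
    omega

lemma ZMod.card_filter_Ico_eq_natCast {m : ℕ} [NeZero m] (x : ZMod m) (r : ℕ) {k : ℕ}
    (hk : k ≤ m) :
    #{j ∈ Ico r (r + k) | x = ((j : ℕ) : ZMod m)} = if (x - r).val < k then 1 else 0 := by
  have hfilter : {j ∈ Ico r (r + k) | x = ((j : ℕ) : ZMod m)} =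
      if (x - r).val < k then {r + (x - r).val} else ∅ := by
    ext j
    simp only [mem_filter, mem_Ico]
    constructor
    · rintro ⟨⟨hrj, hjk⟩, rfl⟩
      have : ((j : ZMod m) - r).val = j - r := by
        rw [← Nat.cast_sub hrj, ZMod.val_natCast_of_lt (by omega)]
      rw [this, if_pos (by omega)]
      simp only [mem_singleton]
      omega
    · split_ifs with h
      · rintro hj
        rw [mem_singleton.mp hj]
        refine ⟨by omega, ?_⟩
        push_cast
        rw [ZMod.natCast_zmod_val]
        ring
      · simp
  rw [hfilter]
  split_ifs <;> rfl

theorem isParkingFunction_iff {n : ℕ} (a : Fin n → ℕ) :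
    IsParkingFunction n a ↔
      (∀ i, a i ∈ Icc 1 n) ∧ ∀ k ≤ n, k ≤ #{i | a i ≤ k} := by
  refine and_congr_right fun _ => ⟨?_, fun hcard => ?_⟩
  · rintro ⟨e, -, hle⟩ k hk
    rw [← e.card_filter_comp]
    exact Fin.le_card_filter_le_of_le_succ hle hk
  · refine ⟨Tuple.sort a, Tuple.monotone_sort a,
      (Tuple.monotone_sort a).le_succ_of_le_card_filter_le fun k hk => ?_⟩
    exact (hcard k hk).trans_eq ((Tuple.sort a).card_filter_comp (fun i => a i ≤ k)).symm

lemma IsParkingFunction.val_natCast_sub_one_add_one {n : ℕ} {a : Fin n → ℕ}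
    (ha : IsParkingFunction n a) (i : Fin n) : ((a i - 1 : ℕ) : ZMod (n + 1)).val + 1 = a i := by
  obtain ⟨h1, h2⟩ := mem_Icc.mp (ha.1 i)
  rw [ZMod.val_natCast_of_lt (by omega)]
  omega

namespace ParkingFunction

variable {n : ℕ}

/-- A parking function shifted down to values `0, …, n - 1` and read in `ZMod (n + 1)`
(the condition at `k = n` forces every value below `n`). -/
def IsParkingFunctionMod (g : Fin n → ZMod (n + 1)) : Prop :=
  ∀ k ≤ n, k ≤ #{i | (g i).val < k}

section Surplus

variable (g : Fin n → ZMod (n + 1))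

def arrivals (t : ℕ) : ℕ := ∑ j ∈ range t, #{i | g i = j}

lemma arrivals_add (r : ℕ) {k : ℕ} (hk : k ≤ n + 1) :
    arrivals g (r + k) = arrivals g r + #{i | (g i - r).val < k} := by
  rw [arrivals, arrivals, ← sum_range_add_sum_Ico _ (Nat.le_add_right r k)]
  congr 1
  calc ∑ j ∈ Ico r (r + k), #{i | g i = j}
      = ∑ i, #{j ∈ Ico r (r + k) | g i = ((j : ℕ) : ZMod (n + 1))} := by
        simp_rw [card_filter]; exact sum_comm
    _ = ∑ i, if (g i - r).val < k then 1 else 0 := by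
      simp_rw [ZMod.card_filter_Ico_eq_natCast _ _ hk]
    _ = #{i | (g i - r).val < k} := (card_filter _ _).symm

def surplus (t : ℕ) : ℤ := arrivals g t - t

lemma surplus_add_period (t : ℕ) : surplus g (t + (n + 1)) = surplus g t - 1 := by
  have h := arrivals_add g t le_rfl
  rw [filter_true_of_mem fun i _ => ZMod.val_lt _, card_univ, Fintype.card_fin] at h
  simp only [surplus, h]
  push_cast
  ring

lemma isParkingFunctionMod_sub_iff (d : ZMod (n + 1)) :
    IsParkingFunctionMod (fun i => g i - d) ↔
      ∀ k < n + 1, surplus g d.val ≤ surplus g (d.val + k) := by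
  have hwindow (k : ℕ) (hk : k < n + 1) := arrivals_add g d.val hk.le
  simp only [ZMod.natCast_zmod_val] at hwindow
  simp only [IsParkingFunctionMod, surplus]
  refine ⟨fun H k hk => ?_, fun H k hk => ?_⟩
  · have := H k (by omega)
    rw [hwindow k hk]
    push_cast
    omega
  · have := H k (by omega)
    rw [hwindow k (by omega)] at this
    push_cast at this
    omega

theorem existsUnique_isParkingFunctionMod_sub :
    ∃! d : ZMod (n + 1), IsParkingFunctionMod (fun i => g i - d) := by
  obtain ⟨r, ⟨hr, hgood⟩, huniq⟩ := cycle_lemma n.succ_pos (surplus g) (surplus_add_period g)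
  refine ⟨r, (isParkingFunctionMod_sub_iff g r).mpr ?_, fun d hd => ?_⟩
  · rwa [ZMod.val_natCast_of_lt hr]
  · rw [← huniq d.val ⟨d.val_lt, (isParkingFunctionMod_sub_iff g d).mp hd⟩,
      ZMod.natCast_zmod_val]

end Surplus

theorem card_mul_card_isParkingFunctionMod :
    (n + 1) * Nat.card {g : Fin n → ZMod (n + 1) // IsParkingFunctionMod g} = (n + 1) ^ n := by
  have hbij : Function.Bijective fun p : ZMod (n + 1) × {g // IsParkingFunctionMod g} =>
      fun i => p.2.1 i + p.1 := by
    refine ⟨fun ⟨d, g, hg⟩ ⟨d', g', hg'⟩ heq => ?_, fun h => ?_⟩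
    · have hsum (i : Fin n) : g i + d = g' i + d' := congrFun heq i
      have hd : d = d' := (existsUnique_isParkingFunctionMod_sub fun i => g i + d).unique
        (by simpa using hg) (by simpa [hsum] using hg')
      subst hd
      exact Prod.ext rfl (Subtype.ext (funext fun i => add_right_cancel (hsum i)))
    · obtain ⟨d, hd, -⟩ := existsUnique_isParkingFunctionMod_sub h
      exact ⟨(d, ⟨_, hd⟩), funext fun i => sub_add_cancel _ _⟩
  simpa [Nat.card_prod, Nat.card_fun] using Nat.card_eq_of_bijective _ hbij

lemma isParkingFunction_iff_isParkingFunctionMod (a : Fin n → ℕ) (g : Fin n → ZMod (n + 1))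
    (h : ∀ i, a i = (g i).val + 1) : IsParkingFunction n a ↔ IsParkingFunctionMod g := by
  have hcard (k : ℕ) : #{i | a i ≤ k} = #{i | (g i).val < k} := by
    congr 1
    ext i
    simp only [mem_filter, mem_univ, true_and, h i]
    omega
  simp only [isParkingFunction_iff, hcard]
  refine ⟨And.right, fun hg => ⟨fun i => ?_, hg⟩⟩
  have hall : #{i | (g i).val < n} = #(univ : Finset (Fin n)) :=
    le_antisymm (card_filter_le _ _) (by simpa using hg n le_rfl)
  have := card_filter_eq_iff.mp hall i (mem_univ i)
  rw [h i, mem_Icc]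
  omega

def parkingFunctionEquiv :
    {a // IsParkingFunction n a} ≃ {g : Fin n → ZMod (n + 1) // IsParkingFunctionMod g} where
  toFun a := ⟨fun i => ((a.1 i - 1 : ℕ) : ZMod (n + 1)),
    (isParkingFunction_iff_isParkingFunctionMod _ _
      fun i => (IsParkingFunction.val_natCast_sub_one_add_one a.2 i).symm).mp a.2⟩
  invFun g := ⟨fun i => (g.1 i).val + 1,
    (isParkingFunction_iff_isParkingFunctionMod _ _ fun _ => rfl).mpr g.2⟩
  left_inv a := Subtype.ext (funext (IsParkingFunction.val_natCast_sub_one_add_one a.2))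
  right_inv g := Subtype.ext (funext fun i => by simp)

end ParkingFunction

/-- The number of parking functions of length `n` is `(n + 1) ^ (n - 1)`. -/
theorem card_parking_functions (n : ℕ) :
    Nat.card {a : Fin n → ℕ // IsParkingFunction n a} = (n + 1) ^ (n - 1) := by
  have h := ParkingFunction.card_mul_card_isParkingFunctionMod (n := n)
  rw [← Nat.card_congr ParkingFunction.parkingFunctionEquiv] at h
  rcases n with _ | n
  · simpa using h
  · rw [pow_succ'] at h
    exact Nat.eq_of_mul_eq_mul_left (by positivity) h
end
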